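/- arXiv:1907.06586 — 16 statements merged into one kernel-verified Lean document; each statement's English description precedes it below -/
import Mathlib

section
/- For any n-distance d on a set X with |X| ≥ 2, if K ∈ (0,1] satisfies d(x₁,…,xₙ) ≤ K·∑_{i=1}^n d(x₁,…,xₙ)ᵢᶻ for all x₁,…,xₙ,z ∈ X, then K ≥ 1/(n-1). -/
open Finset Function

/-- `d` is an `n`-distance: nonnegative, vanishing exactly on constant tuples,
symmetric, and satisfying the simplex inequality. -/
structure IsNDistance {X : Type*} {n : ℕ} (d : (Fin n → X) → ℝ) : Prop where
  nonneg : ∀ x, 0 ≤ d x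
  eq_zero_iff : ∀ x, d x = 0 ↔ ∀ i j : Fin n, x i = x j
  symm : ∀ (x : Fin n → X) (σ : Equiv.Perm (Fin n)), d (x ∘ σ) = d x
  simplex : ∀ (x : Fin n → X) (z : X), d x ≤ ∑ i, d (Function.update x i z)

/-- Any constant $K ∈ (0,1]$ in a refined simplex inequality satisfies $K ≥ 1/(n-1)$. -/
theorem best_constant_ge {X : Type*} {n : ℕ} (hn : 2 ≤ n) (hX : ∃ a b : X, a ≠ b)
    (d : (Fin n → X) → ℝ) (hd : IsNDistance d) (K : ℝ) (hK0 : 0 < K) (hK1 : K ≤ 1)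
    (h : ∀ (x : Fin n → X) (z : X), d x ≤ K * ∑ i, d (Function.update x i z)) :
    1 / ((n : ℝ) - 1) ≤ K := by
  obtain ⟨a, b, hab⟩ := hX
  have hn0 : 0 < n := by omega
  set i0 : Fin n := ⟨0, hn0⟩ with hi0
  set i1 : Fin n := ⟨1, by omega⟩ with hi1
  set x : Fin n → X := fun i => if i = i0 then a else b with hx
  -- compute each updated term with z = b
  have hupd : ∀ i : Fin n, d (Function.update x i b) = if i = i0 then 0 else d x := by
    intro i
    by_cases hi : i = i0
    · rw [hi, if_pos rfl, (hd.eq_zero_iff _)]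
      have hc : Function.update x i0 b = fun _ => b := by
        funext j
        by_cases hj : j = i0 <;> simp [Function.update, hx, hj]
      intro j k
      simp [hc]
    · have : Function.update x i b = x := by
        funext j
        by_cases hj : j = i
        · subst hj; simp [Function.update, hx, hi]
        · simp [Function.update, hj]
      rw [this, if_neg hi]
  have hsum : ∑ i, d (Function.update x i b) = ((n : ℝ) - 1) * d x := by
    rw [Finset.sum_congr rfl (fun i _ => hupd i)]
    rw [Finset.sum_ite]
    simp only [Finset.sum_const_zero, zero_add, Finset.sum_const, nsmul_eq_mul,
      Finset.filter_ne', Finset.card_erase_of_mem (Finset.mem_univ i0), Finset.card_univ,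
      Fintype.card_fin]
    have : ((n - 1 : ℕ) : ℝ) = (n : ℝ) - 1 := by
      push_cast [Nat.cast_sub hn0]
      ring
    rw [this]
  have hdx : 0 < d x := by
    rcases lt_or_eq_of_le (hd.nonneg x) with h' | h'
    · exact h'
    · exfalso
      have h01 : i1 ≠ i0 := by simp [hi0, hi1, Fin.ext_iff]
      have := (hd.eq_zero_iff x).mp h'.symm i0 i1
      simp only [hx, if_pos rfl, if_neg h01] at this
      exact hab this
  have key := h x b
  rw [hsum] at key
  have hn1 : 0 < (n : ℝ) - 1 := by
    have : (2 : ℝ) ≤ n := by exact_mod_cast hn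
    linarith
  rw [div_le_iff₀ hn1]
  nlinarith [key, hdx, hn1]
end

section
/- The map d : ℝⁿ → ℝ≥0 defined by d(x₁,…,xₙ) = max_{i=1,…,n-1}(x₍ᵢ₊₁₎ − x₍ᵢ₎), where x₍ᵢ₎ denotes the i-th smallest value among x₁,…,xₙ, is an n-distance on ℝ (for n ≥ 2): it is zero iff all arguments are equal, symmetric, and satisfies the simplex inequality. -/
open Finset Function

/-- The largest gap between consecutive order statistics. -/
noncomputable def largestGap {n : ℕ} (x : Fin (n + 2) → ℝ) : ℝ :=
  ⨆ i : Fin (n + 1), (x (Tuple.sort x i.succ) - x (Tuple.sort x i.castSucc))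

/-!
If the largest gap of `x` is the gap `(a, b)` between the values `x j = a` and `x k = b`, then
no value of `x` lies strictly between `a` and `b`. Moving `x j` to `z` leaves the gap `(max a z, b)`
empty, and moving `x k` to `z` leaves `(a, min b z)` empty; whatever the position of `z`, these two
gaps have total length at least `b - a`, which gives the simplex inequality.
-/

theorem apply_eq_apply_sort_symm {α : Type*} [LinearOrder α] {m : ℕ} (x : Fin m → α)
    (r : Fin m) :
    x r = x (Tuple.sort x ((Tuple.sort x).symm r)) := by
  rw [Equiv.apply_symm_apply]

theorem sort_castSucc_le_sort_succ {α : Type*} [LinearOrder α] {m : ℕ} (x : Fin (m + 1) → α)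
    (i : Fin m) :
    x (Tuple.sort x i.castSucc) ≤ x (Tuple.sort x i.succ) :=
  Tuple.monotone_sort x Fin.castSucc_lt_succ.le

section LargestGap

variable {n : ℕ}

theorem le_largestGap (x : Fin (n + 2) → ℝ) (i : Fin (n + 1)) :
    x (Tuple.sort x i.succ) - x (Tuple.sort x i.castSucc) ≤ largestGap x := by
  unfold largestGap
  exact le_ciSup (f := fun i => x (Tuple.sort x i.succ) - x (Tuple.sort x i.castSucc))
    (Finite.bddAbove_range _) i

theorem largestGap_nonneg (x : Fin (n + 2) → ℝ) : 0 ≤ largestGap x :=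
  (sub_nonneg.2 (sort_castSucc_le_sort_succ x 0)).trans (le_largestGap x 0)

theorem sub_le_largestGap_of_forall_le_or_le {x : Fin (n + 2) → ℝ} {u v : ℝ}
    (hu : ∃ p, x p ≤ u) (hv : ∃ q, v ≤ x q) (hsep : ∀ r, x r ≤ u ∨ v ≤ x r) :
    v - u ≤ largestGap x := by
  by_contra! hlt
  obtain ⟨p, hp⟩ := hu
  obtain ⟨q, hq⟩ := hv
  -- with every gap shorter than `v - u`, the sorted values can never jump from `≤ u` to `≥ v`
  have hsorted_le : ∀ i, x (Tuple.sort x i) ≤ u := by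
    intro i
    induction i using Fin.induction with
    | zero =>
      rw [apply_eq_apply_sort_symm x p] at hp
      exact (Tuple.monotone_sort x (Fin.zero_le _)).trans hp
    | succ i ih =>
      have hgap := le_largestGap x i
      exact (hsep _).resolve_right (by linarith)
  have := hsorted_le ((Tuple.sort x).symm q)
  rw [← apply_eq_apply_sort_symm x q] at this
  linarith [largestGap_nonneg x]

theorem exists_largestGap_eq (x : Fin (n + 2) → ℝ) :
    ∃ j k, j ≠ k ∧ largestGap x = x k - x j ∧ ∀ r, x r ≤ x j ∨ x k ≤ x r := by
  obtain ⟨i, hi⟩ := Finite.exists_max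
    fun i : Fin (n + 1) => x (Tuple.sort x i.succ) - x (Tuple.sort x i.castSucc)
  refine ⟨Tuple.sort x i.castSucc, Tuple.sort x i.succ,
    (Tuple.sort x).injective.ne Fin.castSucc_lt_succ.ne,
    (ciSup_le hi).antisymm (le_largestGap x i), fun r => ?_⟩
  rw [apply_eq_apply_sort_symm x r]
  rcases le_or_gt ((Tuple.sort x).symm r) i.castSucc with hr | hr
  · exact .inl (Tuple.monotone_sort x hr)
  · exact .inr (Tuple.monotone_sort x (Fin.castSucc_lt_iff_succ_le.mp hr))

theorem sub_max_le_largestGap_update {x : Fin (n + 2) → ℝ} {j k : Fin (n + 2)} (hjk : j ≠ k)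
    {a : ℝ} (hsep : ∀ r, x r ≤ a ∨ x k ≤ x r) (z : ℝ) :
    x k - max a z ≤ largestGap (update x j z) := by
  refine sub_le_largestGap_of_forall_le_or_le ⟨j, by simp⟩ ⟨k, by simp [hjk.symm]⟩ fun r => ?_
  rcases eq_or_ne r j with rfl | hr
  · simp
  · rw [update_of_ne hr]
    exact (hsep r).imp_left (le_max_of_le_left ·)

theorem min_sub_le_largestGap_update {x : Fin (n + 2) → ℝ} {j k : Fin (n + 2)} (hjk : j ≠ k)
    {b : ℝ} (hsep : ∀ r, x r ≤ x j ∨ b ≤ x r) (z : ℝ) :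
    min b z - x j ≤ largestGap (update x k z) := by
  refine sub_le_largestGap_of_forall_le_or_le ⟨j, by simp [hjk]⟩ ⟨k, by simp⟩ fun r => ?_
  rcases eq_or_ne r k with rfl | hr
  · simp
  · rw [update_of_ne hr]
    exact (hsep r).imp_right (min_le_of_left_le ·)

theorem largestGap_le_sum_update (x : Fin (n + 2) → ℝ) (z : ℝ) :
    largestGap x ≤ ∑ i, largestGap (update x i z) := by
  obtain ⟨j, k, hjk, hgap, hsep⟩ := exists_largestGap_eq x
  have hj := sub_max_le_largestGap_update hjk hsep z
  have hk := min_sub_le_largestGap_update hjk hsep z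
  have hpair : largestGap (update x j z) + largestGap (update x k z)
      ≤ ∑ i, largestGap (update x i z) := by
    rw [← sum_pair (f := fun i => largestGap (update x i z)) hjk]
    exact sum_le_sum_of_subset_of_nonneg (subset_univ _) fun i _ _ => largestGap_nonneg _
  have hj0 := largestGap_nonneg (update x j z)
  have hk0 := largestGap_nonneg (update x k z)
  rcases le_total z (x j) with hz | hz
  · rw [max_eq_left hz] at hj
    linarith
  rw [max_eq_right hz] at hj
  rcases le_total z (x k) with hz' | hz'
  · rw [min_eq_right hz'] at hk
    linarith
  · rw [min_eq_left hz'] at hk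
    linarith

theorem largestGap_eq_zero_iff (x : Fin (n + 2) → ℝ) :
    largestGap x = 0 ↔ ∀ i j, x i = x j := by
  constructor
  · intro h
    have hconst : ∀ i, x (Tuple.sort x i) = x (Tuple.sort x 0) := by
      intro i
      induction i using Fin.induction with
      | zero => rfl
      | succ i ih =>
        have := le_largestGap x i
        have := sort_castSucc_le_sort_succ x i
        linarith
    intro i j
    rw [apply_eq_apply_sort_symm x i, apply_eq_apply_sort_symm x j]
    exact (hconst _).trans (hconst _).symm
  · intro h
    have hgap : ∀ i : Fin (n + 1), x (Tuple.sort x i.succ) - x (Tuple.sort x i.castSucc) = 0 :=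
      fun i => sub_eq_zero.2 (h _ _)
    simp only [largestGap, hgap, ciSup_const]

theorem largestGap_comp_perm (x : Fin (n + 2) → ℝ) (σ : Equiv.Perm (Fin (n + 2))) :
    largestGap (x ∘ σ) = largestGap x := by
  have h := congrFun (Tuple.comp_perm_comp_sort_eq_comp_sort (f := x) (σ := σ))
  simp only [comp_apply] at h
  simp only [largestGap, comp_apply, h]

end LargestGap

/-- The length of a largest inner interval is an $n$-distance on $ℝ$ ($n ≥ 2$). -/
theorem largestGap_isNDistance (n : ℕ) :
    IsNDistance (largestGap (n := n)) :=
  ⟨largestGap_nonneg, largestGap_eq_zero_iff, largestGap_comp_perm, largestGap_le_sum_update⟩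
end

section
/- Let d be an n-distance on X whose best constant is K*ₙ (i.e., d(x₁,…,xₙ) ≤ K*ₙ·∑_{i=1}^n d(…)ᵢᶻ for all arguments, and K*ₙ is the least such constant). Then for any integer k with n − 1/K*ₙ < k ≤ n, we have d(x₁,…,xₙ) ≤ (1/(1/K*ₙ − n + k))·∑_{i=1}^k d(x₁,…,xₙ)ᵢᶻ for all x₁,…,xₙ,z ∈ X. -/
/-!
Write `a_k = 1/K - n + k` and `S_k(x, z) = ∑_{i<k} d(x)ᵢᶻ`; we show `a_k d(x) ≤ S_k(x, z)` by
downward induction on `k`, the case `k = n` being the hypothesis on `K`. For the step from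
`k + 1` to `k`, let `j = k` and `y = xⱼᶻ`. The inequality at `k + 1` for `(x, z)` and for
`(y, xⱼ)` gives `a d(x) ≤ d(y) + S` and `a d(y) ≤ d(x) + S` with `a = a_{k+1}` and `S = S_k(x, z)`,
because `yⱼ^{xⱼ} = x` and, by symmetry of `d`, `d(yᵢ^{xⱼ}) = d(xᵢᶻ)` for `i ≠ j`.
Eliminating `d(y)` gives `(a - 1) d(x) ≤ S`.
-/

open Finset Function

section PartialSimplex

variable {X : Type*} {n : ℕ}

lemma update_update_comp_swap (x : Fin n → X) (z : X) {i j : Fin n} (hij : i ≠ j) :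
    update (update x j z) i (x j) ∘ Equiv.swap i j = update x i z := by
  funext m
  rcases eq_or_ne m i with rfl | hmi
  · simp [hij.symm]
  · rcases eq_or_ne m j with rfl | hmj
    · simp [hmi]
    · simp [Equiv.swap_apply_of_ne_of_ne hmi hmj, hmi, hmj]

lemma sub_one_mul_le_of_mul_le_add {a p q s : ℝ} (ha : 0 ≤ a)
    (hp : a * p ≤ q + s) (hq : a * q ≤ p + s) : (a - 1) * p ≤ s := by
  have h : (a + 1) * ((a - 1) * p) ≤ (a + 1) * s := by nlinarith [mul_le_mul_of_nonneg_left hp ha]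
  exact le_of_mul_le_mul_left h (by linarith)

def partialSimplexSum (d : (Fin n → X) → ℝ) (k : ℕ) (x : Fin n → X) (z : X) : ℝ :=
  ∑ i ∈ univ.filter (fun i : Fin n => (i : ℕ) < k), d (update x i z)

variable (d : (Fin n → X) → ℝ)

lemma partialSimplexSum_self (x : Fin n → X) (z : X) :
    partialSimplexSum d n x z = ∑ i, d (update x i z) := by
  simp [partialSimplexSum]

lemma partialSimplexSum_succ {k : ℕ} (hk : k < n) (x : Fin n → X) (z : X) :
    partialSimplexSum d (k + 1) x z = d (update x ⟨k, hk⟩ z) + partialSimplexSum d k x z := by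
  have hsplit : univ.filter (fun i : Fin n => (i : ℕ) < k + 1) =
      insert ⟨k, hk⟩ (univ.filter (fun i : Fin n => (i : ℕ) < k)) := by
    ext i
    simp only [mem_filter, mem_univ, true_and, mem_insert, Fin.ext_iff]
    omega
  rw [partialSimplexSum, hsplit, sum_insert (by simp)]
  rfl

variable {d}

lemma partialSimplexSum_update_update (hsymm : ∀ (x : Fin n → X) (σ : Equiv.Perm (Fin n)),
      d (x ∘ σ) = d x) {k : ℕ} (hk : k < n) (x : Fin n → X) (z : X) :
    partialSimplexSum d k (update x ⟨k, hk⟩ z) (x ⟨k, hk⟩) = partialSimplexSum d k x z := by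
  refine sum_congr rfl fun i hi => ?_
  have hij : i ≠ ⟨k, hk⟩ := fun h => by simp [h] at hi
  rw [← hsymm _ (Equiv.swap i ⟨k, hk⟩), update_update_comp_swap x z hij]

lemma sub_one_mul_le_partialSimplexSum (hsymm : ∀ (x : Fin n → X) (σ : Equiv.Perm (Fin n)),
      d (x ∘ σ) = d x) {a : ℝ} (ha : 0 ≤ a) {k : ℕ} (hk : k < n)
    (h : ∀ x z, a * d x ≤ partialSimplexSum d (k + 1) x z) (x : Fin n → X) (z : X) :
    (a - 1) * d x ≤ partialSimplexSum d k x z := by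
  set j : Fin n := ⟨k, hk⟩
  have hx := h x z
  have hy := h (update x j z) (x j)
  rw [partialSimplexSum_succ d hk] at hx hy
  rw [update_idem, update_eq_self, partialSimplexSum_update_update hsymm] at hy
  exact sub_one_mul_le_of_mul_le_add ha hx hy

theorem mul_le_partialSimplexSum (hsymm : ∀ (x : Fin n → X) (σ : Equiv.Perm (Fin n)),
      d (x ∘ σ) = d x) {c : ℝ} (hc : ∀ x z, c * d x ≤ ∑ i, d (update x i z))
    {k : ℕ} (hk : k ≤ n) (hck : (n : ℝ) - 1 ≤ c + k) (x : Fin n → X) (z : X) :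
    (c - n + k) * d x ≤ partialSimplexSum d k x z := by
  induction hk using Nat.decreasingInduction generalizing x z with
  | self => simpa [partialSimplexSum_self] using hc x z
  | of_succ k hk ih =>
    have h := sub_one_mul_le_partialSimplexSum hsymm (a := c - n + (k + 1 : ℕ))
      (by push_cast; linarith) hk (ih (by push_cast; linarith)) x z
    push_cast at h
    linarith

end PartialSimplex

theorem partial_simplex_of_best_constant_general {X : Type*} {n : ℕ}
    (d : (Fin n → X) → ℝ) (hd : IsNDistance d) (K : ℝ) (hK0 : 0 < K)
    (hK : ∀ (x : Fin n → X) (z : X), d x ≤ K * ∑ i, d (Function.update x i z))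
    (k : ℕ) (hk1 : (n : ℝ) - 1 / K < k) (hk2 : k ≤ n) :
    ∀ (x : Fin n → X) (z : X),
      d x ≤ (1 / (1 / K - n + k)) *
        ∑ i ∈ Finset.univ.filter (fun i : Fin n => (i : ℕ) < k), d (Function.update x i z) := by
  intro x z
  have hc : ∀ x z, 1 / K * d x ≤ ∑ i, d (update x i z) := fun x z => by
    rw [one_div, inv_mul_le_iff₀ hK0]
    exact hK x z
  have ha : 0 < 1 / K - n + k := by linarith
  rw [one_div_mul_eq_div, le_div_iff₀ ha, mul_comm]
  exact mul_le_partialSimplexSum hd.symm hc hk2 (by linarith) x z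

/-- Partial simplex inequalities derived from the best constant. -/
theorem partial_simplex_of_best_constant {X : Type*} {n : ℕ} (hn : 2 ≤ n)
    (d : (Fin n → X) → ℝ) (hd : IsNDistance d) (K : ℝ) (hK0 : 0 < K)
    (hK : ∀ (x : Fin n → X) (z : X), d x ≤ K * ∑ i, d (Function.update x i z))
    (k : ℕ) (hk1 : (n : ℝ) - 1 / K < k) (hk2 : k ≤ n) :
    ∀ (x : Fin n → X) (z : X),
      d x ≤ (1 / (1 / K - n + k)) *
        ∑ i ∈ Finset.univ.filter (fun i : Fin n => (i : ℕ) < k), d (Function.update x i z) :=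
  partial_simplex_of_best_constant_general d hd K hK0 hK k hk1 hk2
end

section
/- Let d be a standard n-distance on X (i.e., d(x₁,…,xₙ) ≤ (1/(n-1))·∑_{i=1}^n d(x₁,…,xₙ)ᵢᶻ holds for all x₁,…,xₙ,z ∈ X). Then for any k ∈ {2,…,n} and all x₁,…,xₙ,z ∈ X, the partial simplex inequality d(x₁,…,xₙ) ≤ (1/(k-1))·∑_{i=1}^k d(x₁,…,xₙ)ᵢᶻ holds. -/
open Finset Function

lemma card_filter_lt_aux (n k : ℕ) (h : k ≤ n) :
    (Finset.univ.filter (fun i : Fin n => (i:ℕ) < k)).card = k := by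
  have h2 : ((Finset.univ.filter (fun i : Fin n => (i:ℕ) < k)).map Fin.valEmbedding)
      = Finset.Iio k := by
    ext i
    simp only [Finset.mem_map, Finset.mem_filter, Finset.mem_univ, true_and,
      Fin.valEmbedding_apply, Finset.mem_Iio]
    constructor
    · rintro ⟨a, ha, rfl⟩; exact ha
    · intro hi; exact ⟨⟨i, by omega⟩, hi, rfl⟩
  have := congrArg Finset.card h2
  simpa using this

/-- Any standard $n$-distance satisfies all partial simplex inequalities with constant $1/(k-1)$. -/
theorem standard_partial_simplex {X : Type*} {n : ℕ} (hn : 2 ≤ n)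
    (d : (Fin n → X) → ℝ) (hd : IsNDistance d)
    (hstd : ∀ (x : Fin n → X) (z : X),
      d x ≤ (1 / ((n : ℝ) - 1)) * ∑ i, d (Function.update x i z)) :
    ∀ k, 2 ≤ k → k ≤ n → ∀ (x : Fin n → X) (z : X),
      d x ≤ (1 / ((k : ℝ) - 1)) *
        ∑ i ∈ Finset.univ.filter (fun i : Fin n => (i : ℕ) < k), d (Function.update x i z) := by
  intro k hk2 hkn x z
  have hN2 : (2:ℝ) ≤ (n:ℝ) := by exact_mod_cast hn
  have hK2 : (2:ℝ) ≤ (k:ℝ) := by exact_mod_cast hk2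
  have hKN : (k:ℝ) ≤ (n:ℝ) := by exact_mod_cast hkn
  have hN1 : (0:ℝ) < (n:ℝ) - 1 := by linarith
  have hK1 : (0:ℝ) < (k:ℝ) - 1 := by linarith
  set D := d x with hD
  set S := Finset.univ.filter (fun i : Fin n => (i : ℕ) < k) with hS
  set A := ∑ i ∈ S, d (Function.update x i z) with hA
  set T := Finset.univ.filter (fun i : Fin n => ¬ (i : ℕ) < k) with hT
  set B := ∑ i ∈ T, d (Function.update x i z) with hB
  -- full sum splits
  have hsplit : ∑ i, d (Function.update x i z) = A + B := by
    rw [hA, hB, hS, hT, Finset.sum_filter_add_sum_filter_not]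
  -- standard inequality for x
  have h1 : ((n:ℝ) - 1) * D ≤ A + B := by
    have := hstd x z
    rw [hsplit] at this
    rw [div_mul_eq_mul_div, one_mul, le_div_iff₀ hN1] at this
    linarith [this]
  -- key inequality : for every j, n * d (update x j z) ≤ D + (A + B)
  have key : ∀ j : Fin n, (n:ℝ) * d (Function.update x j z) ≤ D + (A + B) := by
    intro j
    have h := hstd (Function.update x j z) (x j)
    have hterm : ∀ i : Fin n,
        d (Function.update (Function.update x j z) i (x j))
          = if i = j then D else d (Function.update x i z) := by
      intro i
      by_cases hij : i = j
      · subst hij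
        rw [if_pos rfl, Function.update_idem, Function.update_eq_self]
      · rw [if_neg hij]
        have heq : Function.update (Function.update x j z) i (x j)
            = (Function.update x i z) ∘ (Equiv.swap i j) := by
          funext p
          by_cases hpi : p = i
          · subst hpi
            simp [Function.update_apply, Equiv.swap_apply_left, hij, Ne.symm hij]
          · by_cases hpj : p = j
            · subst hpj
              simp [Function.update_apply, Equiv.swap_apply_right, hij, Ne.symm hij, hpi]
            · simp [Function.update_apply, Equiv.swap_apply_of_ne_of_ne hpi hpj, hpi, hpj]
        rw [heq, hd.symm]
    have hsum2 : ∑ i, d (Function.update (Function.update x j z) i (x j))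
        = D + ((A + B) - d (Function.update x j z)) := by
      rw [Finset.sum_congr rfl (fun i _ => hterm i)]
      rw [← Finset.add_sum_erase _ _ (Finset.mem_univ j), if_pos rfl]
      rw [Finset.sum_congr rfl
        (fun i hi => if_neg (Finset.ne_of_mem_erase hi))]
      rw [Finset.sum_erase_eq_sub (Finset.mem_univ j), hsplit]
    rw [hsum2] at h
    rw [div_mul_eq_mul_div, one_mul, le_div_iff₀ hN1] at h
    nlinarith [h]
  -- sum key over T
  have hcardS : (S.card : ℝ) = (k : ℝ) := by
    rw [hS, card_filter_lt_aux n k hkn]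
  have hcardT : (T.card : ℝ) = (n:ℝ) - (k:ℝ) := by
    have : S.card + T.card = n := by
      rw [hS, hT, Finset.card_filter_add_card_filter_not, Finset.card_univ,
        Fintype.card_fin]
    have h' : (S.card : ℝ) + (T.card : ℝ) = (n : ℝ) := by exact_mod_cast this
    linarith [hcardS, h']
  have h2 : (n:ℝ) * B ≤ ((n:ℝ) - (k:ℝ)) * (D + (A + B)) := by
    calc (n:ℝ) * B = ∑ j ∈ T, (n:ℝ) * d (Function.update x j z) := by
          rw [hB, Finset.mul_sum]
      _ ≤ ∑ j ∈ T, (D + (A + B)) := Finset.sum_le_sum (fun j _ => key j)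
      _ = ((n:ℝ) - (k:ℝ)) * (D + (A + B)) := by
          rw [Finset.sum_const, nsmul_eq_mul, hcardT]
  -- conclude
  have hfin : (n:ℝ) * (((k:ℝ) - 1) * D) ≤ (n:ℝ) * A := by nlinarith [h1, h2]
  have hlast : ((k:ℝ) - 1) * D ≤ A :=
    le_of_mul_le_mul_left hfin (by linarith : (0:ℝ) < (n:ℝ))
  rw [div_mul_eq_mul_div, one_mul, le_div_iff₀ hK1]
  linarith [hlast]
end

section
/- Let d be a standard n-distance on X. Then for any integer k ∈ {2,…,n} and all x,z ∈ X, d(x,…,x,z,…,z) (with k copies of x and n−k copies of z) ≤ (k/(k-1))·d(x,…,x,z,…,z) (with k−1 copies of x and n−k+1 copies of z). -/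
open Finset Function

/-- For a standard $n$-distance, $d(k·x,(n-k)·z) ≤ (k/(k-1))·d((k-1)·x,(n-k+1)·z)$. -/
theorem standard_repetition_bound {X : Type*} {n : ℕ} (hn : 2 ≤ n)
    (d : (Fin n → X) → ℝ) (hd : IsNDistance d)
    (hstd : ∀ (x : Fin n → X) (z : X),
      d x ≤ (1 / ((n : ℝ) - 1)) * ∑ i, d (Function.update x i z)) :
    ∀ k, 2 ≤ k → k ≤ n → ∀ x z : X,
      d (fun i : Fin n => if (i : ℕ) < k then x else z) ≤
        ((k : ℝ) / ((k : ℝ) - 1)) * d (fun i : Fin n => if (i : ℕ) < k - 1 then x else z) := by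
  intro k hk2 hkn x z
  set y : Fin n → X := fun i => if (i : ℕ) < k then x else z with hy
  set y' : Fin n → X := fun i => if (i : ℕ) < k - 1 then x else z with hy'
  have hk1n : k - 1 < n := by omega
  -- each update at position i < k gives a permuted copy of y'
  have hupd : ∀ i : Fin n, (i : ℕ) < k → d (Function.update y i z) = d y' := by
    intro i hi
    have heq : Function.update y i z = y' ∘ (Equiv.swap i ⟨k - 1, hk1n⟩) := by
      funext j
      simp only [Function.comp_apply]
      rcases eq_or_ne j i with rfl | hji
      · rw [Function.update_self, Equiv.swap_apply_left]
        simp [hy']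
      · rw [Function.update_of_ne hji]
        rcases eq_or_ne j ⟨k - 1, hk1n⟩ with rfl | hjm
        · rw [Equiv.swap_apply_right]
          have hik1 : (i : ℕ) ≠ k - 1 := by
            intro h
            exact hji (Fin.ext h.symm)
          simp only [hy, hy']
          rw [if_pos (by omega), if_pos (by omega)]
        · rw [Equiv.swap_apply_of_ne_of_ne hji hjm]
          have hjk1 : (j : ℕ) ≠ k - 1 := fun h => hjm (Fin.ext h)
          simp only [hy, hy']
          by_cases hj : (j : ℕ) < k - 1
          · rw [if_pos (by omega), if_pos hj]
          · rw [if_neg (by omega), if_neg hj]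
    rw [heq, hd.symm]
  have h1 : ∀ i : Fin n, d (Function.update y i z) = if (i : ℕ) < k then d y' else d y := by
    intro i
    by_cases hi : (i : ℕ) < k
    · simp [hi, hupd i hi]
    · have hyi : y i = z := by simp [hy, hi]
      have : Function.update y i z = y := by
        conv_lhs => rw [← hyi]
        exact Function.update_eq_self i y
      simp [hi, this]
  have hcard : (Finset.univ.filter (fun i : Fin n => (i : ℕ) < k)).card = k := by
    rw [Finset.card_filter]
    rw [Fin.sum_univ_eq_sum_range (fun i => if i < k then 1 else 0)]
    rw [← Finset.sum_range_add_sum_Ico _ hkn]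
    have e1 : ∑ i ∈ Finset.range k, (if i < k then 1 else 0) = k := by
      rw [Finset.sum_congr rfl (fun i hi => if_pos (Finset.mem_range.mp hi))]
      simp
    have e2 : ∑ i ∈ Finset.Ico k n, (if i < k then 1 else 0) = 0 := by
      apply Finset.sum_eq_zero
      intro i hi
      have := (Finset.mem_Ico.mp hi).1
      rw [if_neg (by omega)]
    rw [e1, e2]
    omega
  have hsum : ∑ i, d (Function.update y i z)
      = (k : ℝ) * d y' + ((n : ℝ) - (k : ℝ)) * d y := by
    rw [Finset.sum_congr rfl (fun i _ => h1 i), Finset.sum_ite,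
      Finset.sum_const, Finset.sum_const]
    have hcard2 : (Finset.univ.filter (fun i : Fin n => ¬ (i : ℕ) < k)).card = n - k := by
      have := Finset.card_filter_add_card_filter_not
        (s := (Finset.univ : Finset (Fin n))) (p := fun i : Fin n => (i : ℕ) < k)
      simp only [Finset.card_univ, Fintype.card_fin] at this
      omega
    rw [hcard, hcard2]
    rw [nsmul_eq_mul, nsmul_eq_mul, Nat.cast_sub hkn]
  have key := hstd y z
  rw [hsum] at key
  have hn1 : (0 : ℝ) < (n : ℝ) - 1 := by
    have : (2 : ℝ) ≤ n := by exact_mod_cast hn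
    linarith
  have hk1 : (0 : ℝ) < (k : ℝ) - 1 := by
    have : (2 : ℝ) ≤ k := by exact_mod_cast hk2
    linarith
  have key' : ((n : ℝ) - 1) * d y ≤ (k : ℝ) * d y' + ((n : ℝ) - (k : ℝ)) * d y := by
    have := mul_le_mul_of_nonneg_left key hn1.le
    rw [← mul_assoc, mul_one_div, div_self hn1.ne', one_mul] at this
    linarith
  rw [div_mul_eq_mul_div, le_div_iff₀ hk1]
  nlinarith [key']
end

section
/- Let d be an n-distance on X and let k ∈ {2,…,n}. If K is a constant such that d(x₁,…,xₙ) ≤ K·∑_{i=1}^k d(x₁,…,xₙ)ᵢᶻ for all x₁,…,xₙ,z ∈ X, then d(x₁,…,xₙ) ≤ (kK/n)·∑_{i=1}^n d(x₁,…,xₙ)ᵢᶻ for all x₁,…,xₙ,z ∈ X. -/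
open Finset Function

/-!
Averaging the partial inequality over all permutations `σ` of the indices: by symmetry,
`d x = d (x ∘ σ)`, and the partial inequality for `x ∘ σ` bounds `d x` by `K` times the sum of
`d (update x j z)` over `j ∈ σ '' A`. As `σ` runs over all permutations, each index `j` lies in
`σ '' A` equally often, namely for a fraction `#A / n` of them, so the average bound is
`K * #A / n` times the full simplex sum.
-/

section Averaging

open scoped Nat

variable {ι : Type*} [Fintype ι] [DecidableEq ι]

theorem sum_perm_apply_eq (g : ι → ℝ) (i j : ι) :
    ∑ σ : Equiv.Perm ι, g (σ i) = ∑ σ : Equiv.Perm ι, g (σ j) :=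
  (Equiv.sum_comp (Equiv.mulRight (Equiv.swap i j)) fun σ => g (σ i)).symm.trans <| by
    simp

theorem card_mul_sum_perm_apply (g : ι → ℝ) (i : ι) :
    (Fintype.card ι : ℝ) * ∑ σ : Equiv.Perm ι, g (σ i) = (Fintype.card ι)! * ∑ j, g j :=
  calc (Fintype.card ι : ℝ) * ∑ σ : Equiv.Perm ι, g (σ i)
      = ∑ j : ι, ∑ σ : Equiv.Perm ι, g (σ j) := by
        simp [sum_perm_apply_eq g _ i, Finset.card_univ]
    _ = ∑ σ : Equiv.Perm ι, ∑ j, g (σ j) := Finset.sum_comm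
    _ = (Fintype.card ι)! * ∑ j, g j := by
        simp [Equiv.sum_comp, Fintype.card_perm]

variable {X : Type*}

theorem card_mul_le_of_partial_simplex {d : (ι → X) → ℝ}
    (hsymm : ∀ (x : ι → X) (σ : Equiv.Perm ι), d (x ∘ σ) = d x) (A : Finset ι) (K : ℝ)
    (hK : ∀ (x : ι → X) (z : X), d x ≤ K * ∑ i ∈ A, d (update x i z))
    (x : ι → X) (z : X) :
    Fintype.card ι * d x ≤ K * #A * ∑ i, d (update x i z) := by
  set f : ι → ℝ := fun j => d (update x j z)
  have hperm (σ : Equiv.Perm ι) : d x ≤ K * ∑ i ∈ A, f (σ i) := by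
    have hupdate (i : ι) : d (update (x ∘ σ) i z) = f (σ i) := by
      rw [← update_comp_eq_of_injective x σ.injective, hsymm]
    simpa only [hsymm, hupdate] using hK (x ∘ σ) z
  have hsum : ((Fintype.card ι)! : ℝ) * d x ≤ K * ∑ i ∈ A, ∑ σ : Equiv.Perm ι, f (σ i) := by
    simpa [Finset.mul_sum, Finset.sum_comm (s := A), Fintype.card_perm] using
      Finset.sum_le_sum fun σ (_ : σ ∈ univ) => hperm σ
  have hfact : (0 : ℝ) < (Fintype.card ι)! := by positivity
  refine le_of_mul_le_mul_left ?_ hfact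
  calc ((Fintype.card ι)! : ℝ) * (Fintype.card ι * d x)
      = Fintype.card ι * ((Fintype.card ι)! * d x) := by ring
    _ ≤ Fintype.card ι * (K * ∑ i ∈ A, ∑ σ : Equiv.Perm ι, f (σ i)) := by gcongr
    _ = K * ∑ i ∈ A, Fintype.card ι * ∑ σ : Equiv.Perm ι, f (σ i) := by
        rw [← Finset.mul_sum]; ring
    _ = (Fintype.card ι)! * (K * #A * ∑ j, f j) := by
        simp only [card_mul_sum_perm_apply, Finset.sum_const, nsmul_eq_mul]; ring

end Averaging

theorem full_of_partial_simplex_general {X : Type*} {n : ℕ} (hn : 2 ≤ n)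
    (d : (Fin n → X) → ℝ) (hd : IsNDistance d)
    (k : ℕ) (hkn : k ≤ n) (K : ℝ)
    (hK : ∀ (x : Fin n → X) (z : X),
      d x ≤ K * ∑ i ∈ Finset.univ.filter (fun i : Fin n => (i : ℕ) < k),
        d (Function.update x i z)) :
    ∀ (x : Fin n → X) (z : X),
      d x ≤ ((k : ℝ) * K / n) * ∑ i, d (Function.update x i z) := by
  intro x z
  have hcard : #(univ.filter fun i : Fin n => (i : ℕ) < k) = k := by
    rw [Fin.card_filter_val_lt, min_eq_right hkn]
  have hmain := card_mul_le_of_partial_simplex hd.symm _ K hK x z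
  rw [hcard, Fintype.card_fin] at hmain
  have hn0 : (0 : ℝ) < n := by exact_mod_cast (by omega : 0 < n)
  rw [mul_comm (k : ℝ) K, div_mul_eq_mul_div, le_div_iff₀ hn0, mul_comm]
  exact hmain

/-- A partial simplex inequality with constant $K$ over $k$ summands implies the full
simplex inequality with constant $kK/n$. -/
theorem full_of_partial_simplex {X : Type*} {n : ℕ} (hn : 2 ≤ n)
    (d : (Fin n → X) → ℝ) (hd : IsNDistance d)
    (k : ℕ) (hk2 : 2 ≤ k) (hkn : k ≤ n) (K : ℝ)
    (hK : ∀ (x : Fin n → X) (z : X),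
      d x ≤ K * ∑ i ∈ Finset.univ.filter (fun i : Fin n => (i : ℕ) < k),
        d (Function.update x i z)) :
    ∀ (x : Fin n → X) (z : X),
      d x ≤ ((k : ℝ) * K / n) * ∑ i, d (Function.update x i z) :=
  full_of_partial_simplex_general hn d hd k hkn K hK
end

section
/- For n ≥ 2, the drastic map d : Xⁿ → ℝ≥0 defined by d(x₁,…,xₙ) = 0 if x₁ = ⋯ = xₙ and 1 otherwise, is an n-distance on X, and it satisfies d(x₁,…,xₙ) ≤ (1/(n-1))·∑_{i=1}^n d(x₁,…,xₙ)ᵢᶻ for all x₁,…,xₙ,z ∈ X (i.e., it is standard). -/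
open Finset Function

open Classical in
/-- The drastic map is a standard $n$-distance. -/
theorem drastic_isStandardNDistance {X : Type*} {n : ℕ} (hn : 2 ≤ n) (hX : ∃ a b : X, a ≠ b)
    (d : (Fin n → X) → ℝ)
    (hdef : d = fun x => if ∀ i j : Fin n, x i = x j then 0 else 1) :
    IsNDistance d ∧
    ∀ (x : Fin n → X) (z : X),
      d x ≤ (1 / ((n : ℝ) - 1)) * ∑ i, d (Function.update x i z) := by
  subst hdef
  have hn1 : (1:ℝ) ≤ (n:ℝ) - 1 := by
    have : (2:ℝ) ≤ (n:ℝ) := by exact_mod_cast hn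
    linarith
  -- key: if x is not constant, the sum is at least n - 1
  have key : ∀ (x : Fin n → X) (z : X), ¬ (∀ i j : Fin n, x i = x j) →
      ((n:ℝ) - 1) ≤ ∑ i, (if ∀ j k : Fin n, Function.update x i z j = Function.update x i z k
        then (0:ℝ) else 1) := by
    intro x z hx
    set P : Fin n → Prop := fun i => ∀ j k : Fin n, Function.update x i z j = Function.update x i z k with hP
    have hcard : (univ.filter P).card ≤ 1 := by
      rw [Finset.card_le_one]
      intro a ha b hb
      simp only [mem_filter, hP] at ha hb
      by_contra hab
      apply hx
      have hall : ∀ k : Fin n, x k = z := by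
        intro k
        by_cases hka : k = a
        · have := hb.2 k b
          rw [Function.update_self] at this
          rw [Function.update_of_ne (by rw [hka]; exact hab)] at this
          exact this
        · have := ha.2 k a
          rw [Function.update_self] at this
          rw [Function.update_of_ne hka] at this
          exact this
      intro i j; rw [hall i, hall j]
    have hsum : ∑ i, (if P i then (0:ℝ) else 1) = ((univ.filter fun i => ¬ P i).card : ℝ) := by
      rw [← Finset.sum_boole]
      apply Finset.sum_congr rfl
      intro i _
      by_cases h : P i <;> simp [h]
    rw [hsum]
    have hcards : (univ.filter P).card + (univ.filter fun i => ¬ P i).card = n := by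
      rw [Finset.card_filter_add_card_filter_not]
      simp
    have : n - 1 ≤ (univ.filter fun i => ¬ P i).card := by omega
    have : ((n:ℝ) - 1) ≤ ((n - 1 : ℕ) : ℝ) := by
      rw [Nat.cast_sub (by omega)]; simp
    calc ((n:ℝ) - 1) ≤ ((n - 1 : ℕ) : ℝ) := this
      _ ≤ _ := by exact_mod_cast ‹n - 1 ≤ (univ.filter fun i => ¬ P i).card›
  have sum_nonneg : ∀ (x : Fin n → X) (z : X), (0:ℝ) ≤
      ∑ i, (if ∀ j k : Fin n, Function.update x i z j = Function.update x i z k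
        then (0:ℝ) else 1) := by
    intro x z
    apply Finset.sum_nonneg
    intro i _
    split <;> norm_num
  constructor
  · constructor
    · intro x; split <;> norm_num
    · intro x
      by_cases h : ∀ i j : Fin n, x i = x j
      · simp [h]
      · simp [h]
    · intro x σ
      have : (∀ i j : Fin n, (x ∘ σ) i = (x ∘ σ) j) ↔ ∀ i j : Fin n, x i = x j := by
        constructor
        · intro h i j
          have := h (σ.symm i) (σ.symm j)
          simpa using this
        · intro h i j; exact h _ _
      rw [if_congr this rfl rfl]
    · intro x z
      beta_reduce
      by_cases hx : ∀ i j : Fin n, x i = x j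
      · rw [if_pos hx]; exact sum_nonneg x z
      · rw [if_neg hx]
        calc (1:ℝ) ≤ (n:ℝ) - 1 := hn1
          _ ≤ _ := key x z hx
  · intro x z
    beta_reduce
    by_cases hx : ∀ i j : Fin n, x i = x j
    · rw [if_pos hx]
      apply mul_nonneg
      · positivity
      · exact sum_nonneg x z
    · rw [if_neg hx]
      have hS := key x z hx
      rw [one_div, inv_mul_eq_div, le_div_iff₀ (by linarith : (0:ℝ) < (n:ℝ)-1)]
      linarith
end

section
/- For n ≥ 2, the cardinality-based map d : Xⁿ → ℝ≥0 defined by d(x₁,…,xₙ) = |{x₁,…,xₙ}| − 1 is an n-distance on X and satisfies d(x₁,…,xₙ) ≤ (1/(n-1))·∑_{i=1}^n d(x₁,…,xₙ)ᵢᶻ for all x₁,…,xₙ,z ∈ X, with equality attained when x₁ ≠ x₂ = ⋯ = xₙ = z. -/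
/-!
Write `m` for the number of values of `x` and `T` for those values other than `z`, so
`#T ≥ m - 1`. Each `v ∈ T` is some `x j`, and it survives in the tuple `x` with its `i`-th entry
replaced by `z` for every `i ≠ j`; the replaced tuple also contains `z ∉ T`. Counting the pairs
`(v, i)` with `v` a value of the `i`-th replaced tuple `xᵢ` therefore gives
`∑ i, (#values of xᵢ - 1) ≥ #T * (n - 1) ≥ (m - 1) * (n - 1)`.
-/

open Finset Function

theorem card_mul_le_sum_card_inter {ι α : Type*} [Fintype ι] [DecidableEq α] (s : Finset α)
    (t : ι → Finset α) {k : ℕ} (h : ∀ a ∈ s, k ≤ #{i | a ∈ t i}) :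
    #s * k ≤ ∑ i, #(s ∩ t i) := by
  refine (s.card_nsmul_le_sum _ _ h).trans ?_
  simp_rw [← filter_mem_eq_inter, card_eq_sum_ones, sum_filter]
  exact sum_comm.le

section cardDist

variable {ι X : Type*} [Fintype ι] [DecidableEq X]

def cardDist (x : ι → X) : ℝ := #(univ.image x) - 1

theorem one_le_card_image_univ [Nonempty ι] (x : ι → X) : 1 ≤ #(univ.image x) :=
  card_pos.2 (univ_nonempty.image x)

theorem cardDist_nonneg [Nonempty ι] (x : ι → X) : 0 ≤ cardDist x := by
  rw [cardDist, sub_nonneg]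
  exact_mod_cast one_le_card_image_univ x

theorem cardDist_eq_zero_iff [Nonempty ι] (x : ι → X) :
    cardDist x = 0 ↔ ∀ i j, x i = x j := by
  rw [cardDist, sub_eq_zero, ← Nat.cast_one, Nat.cast_inj, le_antisymm_iff,
    and_iff_left (one_le_card_image_univ x), card_le_one]
  simp

theorem cardDist_comp_equiv {κ : Type*} [Fintype κ] (x : ι → X) (σ : κ ≃ ι) :
    cardDist (x ∘ σ) = cardDist x := by
  classical
  rw [cardDist, cardDist, ← image_image, image_univ_equiv]

variable [DecidableEq ι]

theorem mem_image_update_of_ne (x : ι → X) {i j : ι} (h : j ≠ i) (z : X) :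
    x j ∈ univ.image (update x i z) :=
  mem_image.2 ⟨j, mem_univ j, update_of_ne h z x⟩

theorem card_erase_mul_le_sum_card_inter_image_update (x : ι → X) (z : X) :
    #((univ.image x).erase z) * (Fintype.card ι - 1) ≤
      ∑ i, #((univ.image x).erase z ∩ univ.image (update x i z)) := by
  refine card_mul_le_sum_card_inter _ _ fun v hv => ?_
  obtain ⟨j, -, rfl⟩ := mem_image.1 (mem_of_mem_erase hv)
  calc Fintype.card ι - 1 = #(univ.erase j) := by rw [card_erase_of_mem (mem_univ j), card_univ]
    _ ≤ _ := card_le_card fun i hi =>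
      mem_filter.2 ⟨mem_univ i, mem_image_update_of_ne x (ne_of_mem_erase hi).symm z⟩

theorem card_sub_one_mul_cardDist_le_sum_update [Nonempty ι] (x : ι → X) (z : X) :
    (Fintype.card ι - 1 : ℝ) * cardDist x ≤ ∑ i, cardDist (update x i z) := by
  set T := (univ.image x).erase z
  have hT : cardDist x ≤ #T := by
    rw [cardDist, sub_le_iff_le_add]
    exact_mod_cast Nat.sub_le_iff_le_add.1 pred_card_le_card_erase
  have hcount : (#T : ℝ) * (Fintype.card ι - 1 : ℝ) ≤
      ∑ i, (#(T ∩ univ.image (update x i z)) : ℝ) := by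
    have := Nat.cast_le (α := ℝ) |>.2 (card_erase_mul_le_sum_card_inter_image_update x z)
    push_cast [Nat.cast_sub Fintype.card_pos] at this
    exact this
  have hinter (i : ι) : (#(T ∩ univ.image (update x i z)) : ℝ) ≤ cardDist (update x i z) := by
    have hz : z ∈ univ.image (update x i z) := mem_image.2 ⟨i, mem_univ i, update_self i z x⟩
    have hssub : T ∩ univ.image (update x i z) ⊂ univ.image (update x i z) :=
      ssubset_of_subset_of_ne inter_subset_right fun h =>
        notMem_erase z _ (mem_of_mem_inter_left (h ▸ hz))
    rw [cardDist, le_sub_iff_add_le]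
    exact_mod_cast card_lt_card hssub
  have hcard : (1 : ℝ) ≤ Fintype.card ι := by exact_mod_cast Fintype.card_pos
  calc (Fintype.card ι - 1 : ℝ) * cardDist x ≤ #T * (Fintype.card ι - 1 : ℝ) := by
        rw [mul_comm]
        exact mul_le_mul_of_nonneg_right hT (by linarith)
    _ ≤ _ := hcount
    _ ≤ _ := sum_le_sum fun i _ => hinter i

theorem cardDist_update_const {a b : X} (hab : a ≠ b) {i₀ j : ι} (hj : j ≠ i₀) :
    cardDist (update (const ι b) i₀ a) = 1 := by
  have himage : univ.image (update (const ι b) i₀ a) = {a, b} := by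
    ext v
    simp only [mem_image, mem_univ, true_and, mem_insert, mem_singleton, update_apply,
      const_apply]
    constructor
    · rintro ⟨i, rfl⟩
      split_ifs <;> simp
    · rintro (rfl | rfl)
      · exact ⟨i₀, if_pos rfl⟩
      · exact ⟨j, if_neg hj⟩
  rw [cardDist, himage, card_pair hab]
  norm_num

theorem sum_cardDist_update_update_const {a b : X} (hab : a ≠ b) {i₀ j : ι} (hj : j ≠ i₀) :
    ∑ i, cardDist (update (update (const ι b) i₀ a) i b) = Fintype.card ι - 1 := by
  have : Nonempty ι := ⟨i₀⟩
  have hself : cardDist (update (update (const ι b) i₀ a) i₀ b) = 0 := by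
    rw [update_idem]
    exact (cardDist_eq_zero_iff _).2 fun i j => by simp [update_apply]
  have hother (i : ι) (hi : i ∈ univ.erase i₀) :
      cardDist (update (update (const ι b) i₀ a) i b) = 1 := by
    rw [update_eq_self_iff.2 (update_of_ne (ne_of_mem_erase hi) a (const ι b)).symm]
    exact cardDist_update_const hab hj
  rw [← add_sum_erase _ _ (mem_univ i₀), hself, sum_congr rfl hother, sum_const,
    card_erase_of_mem (mem_univ i₀), card_univ, nsmul_one, Nat.cast_sub Fintype.card_pos]
  simp

end cardDist

theorem cardinality_isStandardNDistance_general {X : Type*} [DecidableEq X] {n : ℕ} (hn : 2 ≤ n)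
    (d : (Fin n → X) → ℝ)
    (hdef : d = fun x => ((Finset.univ.image x).card : ℝ) - 1) :
    IsNDistance d ∧
    (∀ (x : Fin n → X) (z : X),
      d x ≤ (1 / ((n : ℝ) - 1)) * ∑ i, d (Function.update x i z)) ∧
    (∀ a b : X, a ≠ b →
      d (fun i : Fin n => if (i : ℕ) = 0 then a else b) =
        (1 / ((n : ℝ) - 1)) *
          ∑ i, d (Function.update (fun i : Fin n => if (i : ℕ) = 0 then a else b) i b)) := by
  obtain rfl : d = cardDist := hdef
  have : Nonempty (Fin n) := ⟨⟨0, by omega⟩⟩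
  have hn1 : (1 : ℝ) ≤ n - 1 := by
    have : (2 : ℝ) ≤ n := by exact_mod_cast hn
    linarith
  have hbound (x : Fin n → X) (z : X) :
      cardDist x ≤ 1 / ((n : ℝ) - 1) * ∑ i, cardDist (update x i z) := by
    rw [one_div, inv_mul_eq_div, le_div_iff₀ (by linarith), mul_comm]
    simpa using card_sub_one_mul_cardDist_le_sum_update x z
  refine ⟨⟨cardDist_nonneg, cardDist_eq_zero_iff, fun x σ => cardDist_comp_equiv x σ,
    fun x z => (hbound x z).trans ?_⟩, hbound, fun a b hab => ?_⟩
  · exact mul_le_of_le_one_left (sum_nonneg fun i _ => cardDist_nonneg _)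
      ((div_le_one (by linarith)).2 hn1)
  · have hx : (fun i : Fin n => if (i : ℕ) = 0 then a else b) =
        update (const (Fin n) b) ⟨0, by omega⟩ a := by
      funext i
      simp [update_apply, Fin.ext_iff]
    have h10 : (⟨1, by omega⟩ : Fin n) ≠ ⟨0, by omega⟩ := by simp
    rw [hx, cardDist_update_const hab h10, sum_cardDist_update_update_const hab h10,
      Fintype.card_fin]
    field_simp

/-- The cardinality based map is a standard $n$-distance, with the constant attained when
$x_1 ≠ x_2 = ⋯ = x_n = z$. -/
theorem cardinality_isStandardNDistance {X : Type*} [DecidableEq X] {n : ℕ} (hn : 2 ≤ n)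
    (hX : ∃ a b : X, a ≠ b) (d : (Fin n → X) → ℝ)
    (hdef : d = fun x => ((Finset.univ.image x).card : ℝ) - 1) :
    IsNDistance d ∧
    (∀ (x : Fin n → X) (z : X),
      d x ≤ (1 / ((n : ℝ) - 1)) * ∑ i, d (Function.update x i z)) ∧
    (∀ a b : X, a ≠ b →
      d (fun i : Fin n => if (i : ℕ) = 0 then a else b) =
        (1 / ((n : ℝ) - 1)) *
          ∑ i, d (Function.update (fun i : Fin n => if (i : ℕ) = 0 then a else b) i b)) :=
  cardinality_isStandardNDistance_general hn d hdef
end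

section
/- For n ≥ 2 and a metric space (X, d₂), the diameter map d(x₁,…,xₙ) = max_{1≤i<j≤n} d₂(xᵢ,xⱼ) is an n-distance on X and satisfies d(x₁,…,xₙ) ≤ (1/(n-1))·∑_{i=1}^n d(x₁,…,xₙ)ᵢᶻ for all x₁,…,xₙ,z ∈ X. -/
open Finset Function

/-- The diameter map of a metric space is a standard $n$-distance. -/
theorem diameter_isStandardNDistance {X : Type*} [MetricSpace X] {n : ℕ} (hn : 2 ≤ n)
    (hX : ∃ a b : X, a ≠ b) (d : (Fin n → X) → ℝ)
    (hdef : d = fun x => ⨆ p : Fin n × Fin n, dist (x p.1) (x p.2)) :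
    IsNDistance d ∧
    ∀ (x : Fin n → X) (z : X),
      d x ≤ (1 / ((n : ℝ) - 1)) * ∑ i, d (Function.update x i z) := by
  subst hdef
  haveI : Nonempty (Fin n) := ⟨⟨0, by omega⟩⟩
  set f : (Fin n → X) → ℝ := fun x => ⨆ p : Fin n × Fin n, dist (x p.1) (x p.2) with hf
  have hle : ∀ (x : Fin n → X) (i j : Fin n), dist (x i) (x j) ≤ f x := by
    intro x i j
    exact le_ciSup (f := fun p : Fin n × Fin n => dist (x p.1) (x p.2))
      (Set.Finite.bddAbove (Set.finite_range _)) (⟨i, j⟩ : Fin n × Fin n)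
  have hsup_le : ∀ (x : Fin n → X) (c : ℝ), (∀ i j, dist (x i) (x j) ≤ c) → f x ≤ c := by
    intro x c h
    exact ciSup_le fun p => h p.1 p.2
  have hnonneg : ∀ x, 0 ≤ f x := by
    intro x
    obtain ⟨i⟩ := (inferInstance : Nonempty (Fin n))
    calc (0:ℝ) = dist (x i) (x i) := by simp
    _ ≤ f x := hle x i i
  have hmax : ∀ x : Fin n → X, ∃ p : Fin n × Fin n, f x = dist (x p.1) (x p.2) := by
    intro x
    obtain ⟨p, hp⟩ := Finite.exists_max (fun p : Fin n × Fin n => dist (x p.1) (x p.2))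
    exact ⟨p, le_antisymm (hsup_le x _ fun i j => hp (i, j)) (hle x p.1 p.2)⟩
  have hn1 : (0:ℝ) < (n:ℝ) - 1 := by
    have : (2:ℝ) ≤ (n:ℝ) := by exact_mod_cast hn
    linarith
  have key : ∀ (x : Fin n → X) (z : X), ((n:ℝ) - 1) * f x ≤ ∑ i, f (update x i z) := by
    intro x z
    obtain ⟨⟨a, b⟩, hp⟩ := hmax x
    have hsumnn : ∀ i ∈ (univ : Finset (Fin n)), 0 ≤ f (update x i z) := fun i _ => hnonneg _
    by_cases hab : a = b
    · have h0 : f x = 0 := by rw [hp, hab, dist_self]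
      rw [h0, mul_zero]
      exact Finset.sum_nonneg hsumnn
    · have hs : ({a, b} : Finset (Fin n)) ⊆ univ := subset_univ _
      have hsplit :
          ∑ i ∈ (univ \ {a, b} : Finset (Fin n)), f (update x i z)
            + ∑ i ∈ ({a, b} : Finset (Fin n)), f (update x i z)
            = ∑ i, f (update x i z) := Finset.sum_sdiff hs
      have hpair : ∑ i ∈ ({a, b} : Finset (Fin n)), f (update x i z)
          = f (update x a z) + f (update x b z) := Finset.sum_pair hab
      have ha : dist z (x b) ≤ f (update x a z) := by
        have := hle (update x a z) a b
        simpa [Function.update_apply, hab, Ne.symm hab] using this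
      have hb : dist (x a) z ≤ f (update x b z) := by
        have := hle (update x b z) a b
        simpa [Function.update_apply, hab, Ne.symm hab] using this
      have htri : f x ≤ f (update x a z) + f (update x b z) := by
        have := dist_triangle (x a) z (x b)
        rw [hp]
        linarith
      have hrest : ((n:ℝ) - 2) * f x
          ≤ ∑ i ∈ (univ \ {a, b} : Finset (Fin n)), f (update x i z) := by
        have hcard : (univ \ ({a, b} : Finset (Fin n))).card = n - 2 := by
          rw [Finset.card_sdiff_of_subset hs, Finset.card_pair hab, Finset.card_univ, Fintype.card_fin]
        have hbound : ∀ i ∈ (univ \ {a, b} : Finset (Fin n)), f x ≤ f (update x i z) := by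
          intro i hi
          simp only [Finset.mem_sdiff, Finset.mem_insert, Finset.mem_singleton] at hi
          have hia : i ≠ a := fun h => hi.2 (Or.inl h)
          have hib : i ≠ b := fun h => hi.2 (Or.inr h)
          have := hle (update x i z) a b
          rw [hp]
          simpa [Function.update_apply, Ne.symm hia, Ne.symm hib] using this
        calc ((n:ℝ) - 2) * f x = (univ \ ({a, b} : Finset (Fin n))).card * f x := by
              rw [hcard]
              have : ((n - 2 : ℕ) : ℝ) = (n:ℝ) - 2 := by
                push_cast [hn]
                ring
              rw [this]
          _ = ∑ _i ∈ (univ \ {a, b} : Finset (Fin n)), f x := by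
              rw [Finset.sum_const, nsmul_eq_mul]
          _ ≤ _ := Finset.sum_le_sum hbound
      linarith
  constructor
  · refine ⟨hnonneg, ?_, ?_, ?_⟩
    · intro x
      constructor
      · intro h i j
        have h1 := hle x i j
        rw [h] at h1
        exact dist_le_zero.mp h1
      · intro h
        refine le_antisymm (hsup_le x 0 fun i j => ?_) (hnonneg x)
        rw [h i j, dist_self]
    · intro x σ
      refine le_antisymm (hsup_le _ _ fun i j => hle x (σ i) (σ j)) (hsup_le _ _ fun i j => ?_)
      have := hle (x ∘ σ) (σ⁻¹ i) (σ⁻¹ j)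
      simpa using this
    · intro x z
      have h1 := key x z
      have h2 := hnonneg x
      have h3 : (2:ℝ) ≤ (n:ℝ) := by exact_mod_cast hn
      nlinarith [mul_nonneg (by linarith : (0:ℝ) ≤ (n:ℝ) - 2) h2]
  · intro x z
    have h1 := key x z
    rw [div_mul_eq_mul_div, one_mul, le_div_iff₀ hn1]
    linarith
end

section
/- For n ≥ 2, the arithmetic mean based map d : ℝⁿ → ℝ≥0 defined by d(x₁,…,xₙ) = (1/n)·∑_{i=1}^n xᵢ − min{x₁,…,xₙ} is an n-distance on ℝ and satisfies d(x₁,…,xₙ) ≤ (1/(n-1))·∑_{i=1}^n d(x₁,…,xₙ)ᵢᶻ for all x₁,…,xₙ,z ∈ ℝ. -/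
open Finset Function

section

variable {ι : Type*} [Fintype ι]

theorem sum_update_eq [DecidableEq ι] (x : ι → ℝ) (i : ι) (z : ℝ) :
    ∑ j, update x i z j = ∑ j, x j - x i + z := by
  rw [sum_update_of_mem (mem_univ i), ← sum_erase_eq_sub (mem_univ i), sdiff_singleton_eq_erase]
  ring

noncomputable def arithMeanDist (x : ι → ℝ) : ℝ := (∑ i, x i) / Fintype.card ι - ⨅ i, x i

theorem ciInf_le_of_finite (x : ι → ℝ) (i : ι) : ⨅ j, x j ≤ x i :=
  ciInf_le (Set.finite_range x).bddBelow i

theorem arithMeanDist_comp_perm (x : ι → ℝ) (σ : Equiv.Perm ι) :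
    arithMeanDist (x ∘ σ) = arithMeanDist x := by
  simp only [arithMeanDist, comp_apply, Equiv.sum_comp, σ.surjective.iInf_comp]

theorem sum_ciInf_update_le [DecidableEq ι] (x : ι → ℝ) (z : ℝ) (i₀ : ι) :
    ∑ i, ⨅ j, update x i z j ≤ (Fintype.card ι - 1) * x i₀ + z :=
  calc ∑ i, ⨅ j, update x i z j ≤ ∑ i, update x i z i₀ :=
        sum_le_sum fun i _ => ciInf_le_of_finite _ i₀
    _ = ∑ i, update (fun _ => x i₀) i₀ z i := by
        congr 1 with i
        rcases eq_or_ne i i₀ with rfl | h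
        · simp
        · simp [h, h.symm]
    _ = (Fintype.card ι - 1) * x i₀ + z := by
        rw [sum_update_eq, sum_const, card_univ, nsmul_eq_mul]
        ring

variable [Nonempty ι]

theorem arithMeanDist_eq (x : ι → ℝ) :
    arithMeanDist x = (∑ i, (x i - ⨅ j, x j)) / Fintype.card ι := by
  rw [arithMeanDist, sum_sub_distrib, sum_const, card_univ, nsmul_eq_mul, sub_div,
    mul_div_cancel_left₀ _ (by positivity)]

theorem arithMeanDist_nonneg (x : ι → ℝ) : 0 ≤ arithMeanDist x := by
  rw [arithMeanDist_eq]
  exact div_nonneg (sum_nonneg fun i _ => sub_nonneg.2 (ciInf_le_of_finite x i)) (by positivity)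

theorem arithMeanDist_eq_zero_iff (x : ι → ℝ) : arithMeanDist x = 0 ↔ ∀ i j, x i = x j := by
  have hcard : (Fintype.card ι : ℝ) ≠ 0 := by positivity
  rw [arithMeanDist_eq, div_eq_zero_iff, or_iff_left hcard,
    sum_eq_zero_iff_of_nonneg fun i _ => sub_nonneg.2 (ciInf_le_of_finite x i)]
  simp only [mem_univ, true_implies, sub_eq_zero]
  obtain ⟨i₀, hi₀⟩ := exists_eq_ciInf_of_finite (f := x)
  exact ⟨fun h i j => (h i).trans (h j).symm, fun h i => (h i i₀).trans hi₀⟩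

theorem card_sub_one_mul_arithMeanDist_le_sum_update [DecidableEq ι] (x : ι → ℝ) (z : ℝ) :
    (Fintype.card ι - 1) * arithMeanDist x ≤ ∑ i, arithMeanDist (update x i z) := by
  obtain ⟨i₀, hi₀⟩ := exists_eq_ciInf_of_finite (f := x)
  set c : ℝ := (Fintype.card ι : ℝ)
  have hc : c ≠ 0 := by positivity
  calc (c - 1) * arithMeanDist x = (c - 1) * (∑ j, x j) / c + z - ((c - 1) * x i₀ + z) := by
        rw [arithMeanDist, ← hi₀]
        ring
    _ ≤ (c - 1) * (∑ j, x j) / c + z - ∑ i, ⨅ j, update x i z j := by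
        gcongr
        exact sum_ciInf_update_le x z i₀
    _ = ∑ i, arithMeanDist (update x i z) := by
        simp only [arithMeanDist, sum_sub_distrib, ← sum_div, sum_update_eq, sum_add_distrib,
          sum_const, card_univ, nsmul_eq_mul]
        field_simp
        ring

theorem arithMeanDist_le_sum_update [DecidableEq ι] (hι : 2 ≤ Fintype.card ι) (x : ι → ℝ)
    (z : ℝ) : arithMeanDist x ≤ ∑ i, arithMeanDist (update x i z) := by
  have hc : (1 : ℝ) ≤ Fintype.card ι - 1 := by
    rw [le_sub_iff_add_le]
    exact_mod_cast hι
  exact (le_mul_of_one_le_left (arithMeanDist_nonneg x) hc).trans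
    (card_sub_one_mul_arithMeanDist_le_sum_update x z)

end

/-- The arithmetic mean based map is a standard $n$-distance on $ℝ$. -/
theorem arithMean_isStandardNDistance {n : ℕ} (hn : 2 ≤ n) (d : (Fin n → ℝ) → ℝ)
    (hdef : d = fun x : Fin n → ℝ => (∑ i, x i) / n - ⨅ i, x i) :
    IsNDistance d ∧
    ∀ (x : Fin n → ℝ) (z : ℝ),
      d x ≤ (1 / ((n : ℝ) - 1)) * ∑ i, d (Function.update x i z) := by
  have hd : d = arithMeanDist := by
    rw [hdef]
    funext x
    simp only [arithMeanDist, Fintype.card_fin]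
  have : Nonempty (Fin n) := ⟨⟨0, by omega⟩⟩
  have hcard : 2 ≤ Fintype.card (Fin n) := by rwa [Fintype.card_fin]
  subst hd
  refine ⟨⟨arithMeanDist_nonneg, arithMeanDist_eq_zero_iff, arithMeanDist_comp_perm,
    arithMeanDist_le_sum_update hcard⟩, fun x z => ?_⟩
  have hn1 : (0 : ℝ) < n - 1 := by
    rw [sub_pos]
    exact_mod_cast hn
  rw [one_div_mul_eq_div, le_div_iff₀ hn1, mul_comm]
  simpa using card_sub_one_mul_arithMeanDist_le_sum_update x z
end

section
/- If an n-distance d on X is nonincreasing under identification of variables (d(x₁,…,x_{n-1},xₙ) ≥ d(x₁,…,x_{n-1},x₁) for all arguments), then d is repetition invariant: whenever {x₁,…,xₙ} = {x'₁,…,x'ₙ} as sets, d(x₁,…,xₙ) = d(x'₁,…,x'ₙ). -/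
open Finset Function

/-!
Identifying variable `i` with variable `j` is precomposition with `update id i j`. Up to
conjugation by a permutation, every such collapse is the one in the hypothesis, and collapses
together with permutations generate all self-maps of the index set. Hence `d (y ∘ φ) ≤ d y` for
every `φ`, i.e. `d x ≤ d y` whenever `range x ⊆ range y`; equal ranges give equality.
-/

section
variable {ι X : Type*} [DecidableEq ι] {d : (ι → X) → ℝ}

theorem Equiv.Perm.exists_apply_eq_and_apply_eq {i₀ j₀ i j : ι} (h₀ : i₀ ≠ j₀) (h : i ≠ j) :
    ∃ σ : Equiv.Perm ι, σ i₀ = i ∧ σ j₀ = j := by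
  have hne : swap i₀ i j₀ ≠ i := by
    simpa only [swap_apply_left] using (swap i₀ i).injective.ne h₀.symm
  refine ⟨(swap i₀ i).trans (swap (swap i₀ i j₀) j), ?_, ?_⟩
  · simp only [Equiv.trans_apply, swap_apply_left]
    exact swap_apply_of_ne_of_ne hne.symm h
  · simp only [Equiv.trans_apply, swap_apply_left]

theorem apply_update_le_of_apply_update_le
    (hsymm : ∀ (x : ι → X) (σ : Equiv.Perm ι), d (x ∘ σ) = d x) {i₀ j₀ : ι} (h₀ : i₀ ≠ j₀)
    (hle : ∀ x, d (update x i₀ (x j₀)) ≤ d x) (x : ι → X) (i j : ι) :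
    d (update x i (x j)) ≤ d x := by
  rcases eq_or_ne i j with rfl | hij
  · rw [update_eq_self]
  obtain ⟨σ, hσi, hσj⟩ := Equiv.Perm.exists_apply_eq_and_apply_eq h₀ hij
  have hcomp : update (x ∘ σ) i₀ ((x ∘ σ) j₀) = update x i (x j) ∘ σ := by
    rw [update_comp_equiv, comp_apply, hσj, ← hσi, Equiv.symm_apply_apply]
  simpa only [hcomp, hsymm] using hle (x ∘ σ)

theorem apply_comp_le [Finite ι] (hsymm : ∀ (x : ι → X) (σ : Equiv.Perm ι), d (x ∘ σ) = d x)
    (hle : ∀ x i j, d (update x i (x j)) ≤ d x) (x : ι → X) (φ : ι → ι) :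
    d (x ∘ φ) ≤ d x := by
  induction hk : (Set.range φ)ᶜ.ncard using Nat.strong_induction_on generalizing x φ with
  | _ k ih =>
  by_cases hφ : Surjective φ
  · exact (hsymm x (Equiv.ofBijective φ ⟨Finite.injective_iff_surjective.2 hφ, hφ⟩)).le
  obtain ⟨m, hm⟩ : ∃ m, m ∉ Set.range φ := by simpa [Surjective] using hφ
  obtain ⟨a, b, hφab, hab⟩ : ∃ a b, φ a = φ b ∧ a ≠ b := by
    simpa [Injective] using mt Finite.injective_iff_surjective.1 hφ
  -- `ψ` hits `m` as well as everything `φ` hits, since `φ a` is still attained at `b`.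
  set ψ := update φ a m
  have hcomp : x ∘ φ = update x m (x (φ a)) ∘ ψ := by
    funext k
    rcases eq_or_ne k a with rfl | hk
    · simp [ψ]
    · have : φ k ≠ m := fun h => hm ⟨k, h⟩
      simp [ψ, hk, this]
  have hrange : Set.range φ ⊂ Set.range ψ := by
    refine Set.ssubset_iff_of_subset ?_ |>.2 ⟨m, ⟨a, by simp [ψ]⟩, hm⟩
    rintro _ ⟨k, rfl⟩
    rcases eq_or_ne k a with rfl | hk
    · exact ⟨b, by simp [ψ, hab.symm, hφab]⟩
    · exact ⟨k, by simp [ψ, hk]⟩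
  calc d (x ∘ φ) = d (update x m (x (φ a)) ∘ ψ) := by rw [hcomp]
    _ ≤ d (update x m (x (φ a))) :=
      ih _ (hk ▸ Set.ncard_lt_ncard (compl_lt_compl_iff_lt.2 hrange)) _ _ rfl
    _ ≤ d x := hle x m (φ a)

theorem apply_le_apply_of_range_subset [Finite ι]
    (hsymm : ∀ (x : ι → X) (σ : Equiv.Perm ι), d (x ∘ σ) = d x)
    (hle : ∀ x i j, d (update x i (x j)) ≤ d x) {x y : ι → X} (h : Set.range x ⊆ Set.range y) :
    d x ≤ d y := by
  obtain ⟨φ, rfl⟩ := Set.range_subset_range_iff_exists_comp.1 h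
  exact apply_comp_le hsymm hle y φ

end

/-- Nonincreasingness under identification of variables implies repetition invariance. -/
theorem repetition_invariant_of_nonincreasing {X : Type*} {n : ℕ} (hn : 2 ≤ n)
    (d : (Fin n → X) → ℝ) (hd : IsNDistance d)
    (hni : ∀ x : Fin n → X,
      d (Function.update x ⟨n - 1, by omega⟩ (x ⟨0, by omega⟩)) ≤ d x) :
    ∀ x y : Fin n → X, Set.range x = Set.range y → d x = d y := by
  have hle := apply_update_le_of_apply_update_le hd.symm (by rw [Ne, Fin.mk.injEq]; omega) hni
  exact fun x y h => (apply_le_apply_of_range_subset hd.symm hle h.subset).antisymm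
    (apply_le_apply_of_range_subset hd.symm hle h.superset)
end

section
/- Let d be a standard n-distance on X that is repetition invariant, let k ∈ {2,…,n-1} and p ∈ {0,…,n-k}. Then for all x₁,…,x_k,z ∈ X: d(x₁,…,x_{k-1}, x_k,…,x_k) ≤ ((k+p)/((k-1)(k+p-1)))·∑_{i=1}^{k-1} d(x₁,…,x_{k-1},x_k,…,x_k)ᵢᶻ + ((p+1)/((k-1)(k+p-1)))·d(x₁,…,x_{k-1},z,…,z), where x_k fills positions k through n and z fills positions k through n in the last term. -/
/-!
Repetition invariance means `d` only sees the set of entries of a tuple, so after pulling `d` back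
along `m ↦ x_m` (with `k ↦ z`) we may take the entries `x₁, …, x_k, z` to be the distinct naturals
`0, …, k - 1, k`; both standardness and repetition invariance survive the pull-back. For
`y = (0, …, k-2, k-1, …, k-1)` and `t = (0, …, k-1, k, …, k)`, three instances of the standard
inequality (at `y` with `k`, at `(0, …, k-2, k-1, …, k-1, k)` with `k - 1`, at `t` with `k`) give
  `(n - 1) d y ≤ S + (n - k + 1) d t`, `(k - 1) d t ≤ S + d y`, `(k - 1) d t ≤ S + d w`,
where `S` is the sum in the statement and `w` the last tuple. Eliminating `d t` with the
multipliers `(k - 1)(k + p)`, `(k - 1)(n - k - p)` and `n (p + 1)` gives the claim.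
-/

open Finset Function

namespace Set

variable {ι β : Type*} [DecidableEq ι] {f : ι → β} {i : ι}

theorem range_update_of_forall_ne (h : ∀ j ≠ i, f j ≠ f i) (a : β) :
    range (update f i a) = insert a (range f \ {f i}) := by
  ext b
  simp only [mem_range, mem_insert_iff, mem_sdiff, mem_singleton_iff]
  constructor
  · rintro ⟨j, rfl⟩
    by_cases hj : j = i
    · simp [hj]
    · exact Or.inr ⟨⟨j, (update_of_ne hj a f).symm⟩, by rw [update_of_ne hj]; exact h j hj⟩
  · rintro (rfl | ⟨⟨j, rfl⟩, hj⟩)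
    · exact ⟨i, update_self _ _ _⟩
    · exact ⟨j, update_of_ne (fun hji => hj (by rw [hji])) _ _⟩

theorem range_update_of_exists_ne (h : ∃ j ≠ i, f j = f i) (a : β) :
    range (update f i a) = insert a (range f) := by
  obtain ⟨j, hji, hfj⟩ := h
  ext b
  simp only [mem_range, mem_insert_iff]
  constructor
  · rintro ⟨l, rfl⟩
    by_cases hl : l = i
    · simp [hl]
    · exact Or.inr ⟨l, (update_of_ne hl a f).symm⟩
  · rintro (rfl | ⟨l, rfl⟩)
    · exact ⟨i, update_self _ _ _⟩
    · by_cases hl : l = i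
      · exact ⟨j, by rw [update_of_ne hji, hfj, hl]⟩
      · exact ⟨l, update_of_ne hl _ _⟩

end Set

section Standard

variable {α β : Type*} {n : ℕ}

def IsStandard (d : (Fin n → α) → ℝ) : Prop :=
  ∀ (x : Fin n → α) (z : α), d x ≤ (1 / ((n : ℝ) - 1)) * ∑ i, d (update x i z)

def IsRepInvariant (d : (Fin n → α) → ℝ) : Prop :=
  ∀ x y : Fin n → α, Set.range x = Set.range y → d x = d y

theorem IsStandard.comp {d : (Fin n → α) → ℝ} (hd : IsStandard d) (c : β → α) :
    IsStandard fun v : Fin n → β => d (c ∘ v) := by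
  intro v z
  simpa only [comp_update] using hd (c ∘ v) (c z)

theorem IsRepInvariant.comp {d : (Fin n → α) → ℝ} (hd : IsRepInvariant d) (c : β → α) :
    IsRepInvariant fun v : Fin n → β => d (c ∘ v) := by
  intro v w h
  apply hd
  rw [Set.range_comp, Set.range_comp, h]

theorem IsStandard.card_sub_one_mul_le_sum {d : (Fin n → α) → ℝ} (hd : IsStandard d)
    (hn : 2 ≤ n) (v : Fin n → α) (a : α) (s : Finset (Fin n)) (hs : ∀ j ∉ s, v j = a) :
    ((#s : ℝ) - 1) * d v ≤ ∑ i ∈ s, d (update v i a) := by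
  have hn' : (0 : ℝ) < n - 1 := by
    have : (2 : ℝ) ≤ n := by exact_mod_cast hn
    linarith
  have hcompl : ∑ i ∈ sᶜ, d (update v i a) = ((n : ℝ) - #s) * d v := by
    rw [sum_congr rfl fun j hj => by rw [← hs j (mem_compl.mp hj), update_eq_self],
      sum_const, card_compl, Fintype.card_fin, nsmul_eq_mul,
      Nat.cast_sub (by simpa using card_le_univ s)]
  have h := hd v a
  rw [← sum_add_sum_compl s, hcompl, one_div, inv_mul_eq_div, le_div_iff₀ hn'] at h
  linarith

end Standard

def clampTuple (n m : ℕ) : Fin n → ℕ := fun i => min i.val m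

section ClampTuple

variable {n m : ℕ}

theorem range_clampTuple (h : m < n) : Set.range (clampTuple n m) = Set.Iic m := by
  ext l
  simp only [Set.mem_range, Set.mem_Iic, clampTuple]
  constructor
  · rintro ⟨j, rfl⟩
    exact min_le_right _ _
  · exact fun hl => ⟨⟨l, by omega⟩, min_eq_left hl⟩

theorem range_update_clampTuple_of_lt (h : m < n) {i : Fin n} (hi : i.val < m) (a : ℕ) :
    Set.range (update (clampTuple n m) i a) = insert a (Set.Iic m \ {i.val}) := by
  rw [Set.range_update_of_forall_ne, range_clampTuple h, clampTuple, min_eq_left hi.le]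
  intro j hj
  simp only [clampTuple, ne_eq, Fin.ext_iff] at hj ⊢
  omega

theorem range_update_clampTuple_of_le (h : m < n - 1) {i : Fin n} (hi : m ≤ i.val) (a : ℕ) :
    Set.range (update (clampTuple n m) i a) = insert a (Set.Iic m) := by
  rw [Set.range_update_of_exists_ne, range_clampTuple (by omega)]
  by_cases hin : i.val = n - 1
  · exact ⟨⟨m, by omega⟩, by simp only [ne_eq, Fin.ext_iff, clampTuple]; omega⟩
  · exact ⟨⟨n - 1, by omega⟩, by simp only [ne_eq, Fin.ext_iff, clampTuple]; omega⟩

theorem card_filter_not_val_lt (h : m ≤ n) : #{i : Fin n | ¬ i.val < m} = n - m := by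
  rw [filter_not, card_sdiff_of_subset (filter_subset _ _), Fin.card_filter_val_lt, card_univ,
    Fintype.card_fin, min_eq_right h]

end ClampTuple

section Bounds

variable {n k : ℕ} {d : (Fin n → ℕ) → ℝ}

theorem IsStandard.clampTuple_pred_le_add_clampTuple (hstd : IsStandard d)
    (hrep : IsRepInvariant d) (hk : 1 ≤ k) (hkn : k < n) :
    ((n : ℝ) - 1) * d (clampTuple n (k - 1)) ≤
      ∑ i ∈ univ.filter (fun i : Fin n => i.val < k - 1), d (update (clampTuple n (k - 1)) i k)
        + ((n : ℝ) - k + 1) * d (clampTuple n k) := by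
  have hfar : ∀ i ∈ univ.filter (fun i : Fin n => ¬ i.val < k - 1),
      d (update (clampTuple n (k - 1)) i k) = d (clampTuple n k) := by
    intro i hi
    apply hrep
    rw [range_update_clampTuple_of_le (by omega) (by simpa using hi), range_clampTuple hkn]
    ext l
    simp only [Set.mem_insert_iff, Set.mem_Iic]
    omega
  have h := hstd.card_sub_one_mul_le_sum (by omega) (clampTuple n (k - 1)) k univ (by simp)
  rw [← sum_filter_add_sum_filter_not univ (fun i : Fin n => i.val < k - 1), sum_congr rfl hfar,
    sum_const, card_filter_not_val_lt (by omega), nsmul_eq_mul, card_univ, Fintype.card_fin,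
    Nat.cast_sub (by omega), Nat.cast_sub hk] at h
  push_cast at h
  linarith

theorem IsStandard.clampTuple_le_add_update (hstd : IsStandard d) (hrep : IsRepInvariant d)
    (hk : 2 ≤ k) (hkn : k < n) :
    ((k : ℝ) - 1) * d (clampTuple n k) ≤
      ∑ i ∈ univ.filter (fun i : Fin n => i.val < k - 1), d (update (clampTuple n (k - 1)) i k)
        + d (update (clampTuple n k) ⟨k - 1, by omega⟩ k) := by
  set s := univ.filter (fun i : Fin n => i.val < k - 1)
  have hnotin : (⟨k - 1, by omega⟩ : Fin n) ∉ s := by simp [s]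
  have hnear : ∀ i ∈ s,
      d (update (clampTuple n k) i k) = d (update (clampTuple n (k - 1)) i k) := by
    intro i hi
    have hi : i.val < k - 1 := by simpa [s] using hi
    apply hrep
    rw [range_update_clampTuple_of_lt hkn (by omega), range_update_clampTuple_of_lt (by omega) hi]
    ext l
    simp only [Set.mem_insert_iff, Set.mem_sdiff, Set.mem_Iic, Set.mem_singleton_iff]
    omega
  have h := hstd.card_sub_one_mul_le_sum (by omega) (clampTuple n k) k
    (insert ⟨k - 1, by omega⟩ s) fun j hj => by
      simp only [s, mem_insert, mem_filter, mem_univ, true_and, Fin.ext_iff, clampTuple] at hj ⊢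
      omega
  rw [sum_insert hnotin, sum_congr rfl hnear, card_insert_of_notMem hnotin,
    Fin.card_filter_val_lt, min_eq_right (by omega), Nat.cast_add, Nat.cast_sub (by omega)] at h
  push_cast at h
  linarith

theorem IsStandard.clampTuple_le_add_clampTuple_pred (hstd : IsStandard d)
    (hrep : IsRepInvariant d) (hk : 2 ≤ k) (hkn : k < n) :
    ((k : ℝ) - 1) * d (clampTuple n k) ≤
      ∑ i ∈ univ.filter (fun i : Fin n => i.val < k - 1), d (update (clampTuple n (k - 1)) i k)
        + d (clampTuple n (k - 1)) := by
  set s := univ.filter (fun i : Fin n => i.val < k - 1)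
  set last : Fin n := ⟨n - 1, by omega⟩
  set u := update (clampTuple n (k - 1)) last k
  have hnotin : last ∉ s := by
    simp only [s, last, mem_filter, mem_univ, true_and]
    omega
  have hrange_u : Set.range u = insert k (Set.Iic (k - 1)) :=
    range_update_clampTuple_of_le (by omega) (show k - 1 ≤ n - 1 by omega) k
  have hu : d u = d (clampTuple n k) := by
    apply hrep
    rw [hrange_u, range_clampTuple hkn]
    ext l
    simp only [Set.mem_insert_iff, Set.mem_Iic]
    omega
  have hlast : update u last (k - 1) = clampTuple n (k - 1) := by
    rw [update_idem, update_eq_self_iff]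
    exact (min_eq_right (show k - 1 ≤ n - 1 by omega)).symm
  have hnear : ∀ i ∈ s, d (update u i (k - 1)) = d (update (clampTuple n (k - 1)) i k) := by
    intro i hi
    have hi : i.val < k - 1 := by simpa [s] using hi
    apply hrep
    rw [Set.range_update_of_forall_ne, hrange_u, range_update_clampTuple_of_lt (by omega) hi]
    · have hui : u i = i.val := by
        simp only [u, update_apply, Fin.ext_iff, clampTuple, last]
        split_ifs <;> omega
      ext l
      simp only [hui, Set.mem_insert_iff, Set.mem_sdiff, Set.mem_Iic, Set.mem_singleton_iff]
      omega
    · intro j hj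
      simp only [u, ne_eq, Fin.ext_iff, update_apply, clampTuple, last] at hj ⊢
      split_ifs <;> omega
  have h := hstd.card_sub_one_mul_le_sum (by omega) u (k - 1) (insert last s)
    fun j hj => by
      simp only [s, u, last, mem_insert, mem_filter, mem_univ, true_and, Fin.ext_iff,
        update_apply, clampTuple] at hj ⊢
      split_ifs <;> omega
  rw [sum_insert hnotin, sum_congr rfl hnear, card_insert_of_notMem hnotin, hlast, hu,
    Fin.card_filter_val_lt, min_eq_right (by omega), Nat.cast_add, Nat.cast_sub (by omega)] at h
  push_cast at h
  linarith

end Bounds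

theorem le_weighted_sum_of_bounds {n k p A B S D : ℝ} (hk : 2 ≤ k) (hp : 0 ≤ p)
    (hpn : p ≤ n - k) (h1 : (n - 1) * A ≤ S + (n - k + 1) * B) (h2 : (k - 1) * B ≤ S + A)
    (h3 : (k - 1) * B ≤ S + D) :
    A ≤ (k + p) / ((k - 1) * (k + p - 1)) * S + (p + 1) / ((k - 1) * (k + p - 1)) * D := by
  have hpos : 0 < (k - 1) * (k + p - 1) := by nlinarith
  rw [div_mul_eq_mul_div, div_mul_eq_mul_div, ← add_div, le_div_iff₀ hpos]
  have key : n * (A * ((k - 1) * (k + p - 1))) ≤ n * ((k + p) * S + (p + 1) * D) := by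
    linarith [mul_le_mul_of_nonneg_left h1 (by nlinarith : 0 ≤ (k - 1) * (k + p)),
      mul_le_mul_of_nonneg_left h2 (by nlinarith : 0 ≤ (k - 1) * (n - k - p)),
      mul_le_mul_of_nonneg_left h3 (by nlinarith : 0 ≤ n * (p + 1))]
  exact le_of_mul_le_mul_left key (by linarith)

theorem IsStandard.clampTuple_pred_le_weighted_sum {n k : ℕ} {d : (Fin n → ℕ) → ℝ}
    (hstd : IsStandard d) (hrep : IsRepInvariant d) (hk : 2 ≤ k) (hkn : k < n) {p : ℕ}
    (hp : p ≤ n - k) :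
    d (clampTuple n (k - 1)) ≤
      ((k : ℝ) + p) / (((k : ℝ) - 1) * ((k : ℝ) + p - 1)) *
        ∑ i ∈ univ.filter (fun i : Fin n => i.val < k - 1), d (update (clampTuple n (k - 1)) i k)
      + ((p : ℝ) + 1) / (((k : ℝ) - 1) * ((k : ℝ) + p - 1)) *
          d (update (clampTuple n k) ⟨k - 1, by omega⟩ k) := by
  have hpn : (p : ℝ) ≤ n - k := by
    rw [← Nat.cast_sub hkn.le]
    exact_mod_cast hp
  exact le_weighted_sum_of_bounds (by exact_mod_cast hk) p.cast_nonneg hpn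
    (hstd.clampTuple_pred_le_add_clampTuple hrep (by omega) hkn)
    (hstd.clampTuple_le_add_clampTuple_pred hrep hk hkn) (hstd.clampTuple_le_add_update hrep hk hkn)

/-- Key lemma for standard repetition-invariant $n$-distances. -/
theorem standard_repInv_lemma {X : Type*} {n : ℕ}
    (d : (Fin n → X) → ℝ)
    (hstd : ∀ (x : Fin n → X) (z : X),
      d x ≤ (1 / ((n : ℝ) - 1)) * ∑ i, d (Function.update x i z))
    (hrep : ∀ x y : Fin n → X, Set.range x = Set.range y → d x = d y)
    (k p : ℕ) (hk2 : 2 ≤ k) (hkn : k ≤ n - 1) (hp : p ≤ n - k)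
    (x : Fin k → X) (z : X) :
    d (fun i : Fin n => x ⟨min i.val (k - 1), by omega⟩) ≤
      (((k : ℝ) + p) / (((k : ℝ) - 1) * ((k : ℝ) + (p : ℝ) - 1))) *
        ∑ i ∈ Finset.univ.filter (fun i : Fin n => (i : ℕ) < k - 1),
          d (Function.update (fun i : Fin n => x ⟨min i.val (k - 1), by omega⟩) i z)
      + (((p : ℝ) + 1) / (((k : ℝ) - 1) * ((k : ℝ) + (p : ℝ) - 1))) *
          d (fun i : Fin n => if h : (i : ℕ) < k - 1 then x ⟨i.val, by omega⟩ else z) := by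
  let c : ℕ → X := fun m => if h : m < k then x ⟨m, h⟩ else z
  have hc : c k = z := dif_neg (lt_irrefl k)
  have hy : (fun i : Fin n => x ⟨min i.val (k - 1), by omega⟩) = c ∘ clampTuple n (k - 1) := by
    funext i
    exact (dif_pos (show min i.val (k - 1) < k by omega) (t := fun h => x ⟨_, h⟩)).symm
  have hw : (fun i : Fin n => if h : (i : ℕ) < k - 1 then x ⟨i.val, by omega⟩ else z) =
      c ∘ update (clampTuple n k) ⟨k - 1, by omega⟩ k := by
    funext i
    simp only [c, clampTuple, comp_apply, update_apply, Fin.ext_iff]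
    split_ifs <;> first | rfl | omega | exact congrArg x (Fin.ext (by dsimp only; omega))
  have key := IsStandard.clampTuple_pred_le_weighted_sum (IsStandard.comp (d := d) hstd c)
    (IsRepInvariant.comp (d := d) hrep c) hk2 (by omega) hp
  rw [hy, hw]
  simpa only [comp_update, hc] using key
end

section
/- For n ≥ 3, k ∈ {2,…,n}, the arithmetic mean based n-distance d(x₁,…,xₙ) = (1/n)∑xᵢ − min xᵢ on ℝ satisfies the strong k-simplex inequality with constant 1/(k-1): for any n₁,…,n_k ≥ 1 with ∑nᵢ = n, the map d'(x₁,…,x_k) = d(n₁·x₁,…,n_k·x_k) satisfies d'(x₁,…,x_k) ≤ (1/(k-1))·∑_{i=1}^k d'(x₁,…,x_k)ᵢᶻ for all x₁,…,x_k,z ∈ ℝ. -/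
open Finset Function

/-- The \$n\$-tuple obtained by repeating each \$x_j\$ exactly \$m_j\$ times. -/
def blowup {X : Type*} {k n : ℕ} (m : Fin k → ℕ) (h : ∑ j, m j = n) (x : Fin k → X) :
    Fin n → X :=
  fun i => ((List.finRange k).flatMap fun j => List.replicate (m j) (x j)).get
    (Fin.cast (by rw [List.length_flatMap, ← h, Fin.sum_univ_def]; congr 1;
                  simp [Function.comp_def]) i)

open Finset Function

lemma blowup_len {X : Type*} {k n : ℕ} (m : Fin k → ℕ) (h : ∑ j, m j = n) (x : Fin k → X) :
    n = ((List.finRange k).flatMap fun j => List.replicate (m j) (x j)).length := by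
  rw [List.length_flatMap, ← h, Fin.sum_univ_def]; congr 1; simp [Function.comp_def]

lemma blowup_eq_get {X : Type*} {k n : ℕ} (m : Fin k → ℕ) (h : ∑ j, m j = n) (x : Fin k → X) :
    blowup m h x = fun i =>
      ((List.finRange k).flatMap fun j => List.replicate (m j) (x j)).get
        (Fin.cast (blowup_len m h x) i) := rfl

lemma blowup_range' {X : Type*} {k n : ℕ} (m : Fin k → ℕ) (h : ∑ j, m j = n)
    (hm : ∀ j, 1 ≤ m j) (x : Fin k → X) :
    Set.range (blowup m h x) = Set.range x := by
  ext a
  rw [blowup_eq_get]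
  simp only [Set.mem_range]
  constructor
  · rintro ⟨i, rfl⟩
    have hmem : ((List.finRange k).flatMap fun j => List.replicate (m j) (x j)).get
        (Fin.cast (blowup_len m h x) i) ∈
        (List.finRange k).flatMap fun j => List.replicate (m j) (x j) :=
      List.mem_iff_get.2 ⟨_, rfl⟩
    rw [List.mem_flatMap] at hmem
    obtain ⟨j, -, hj⟩ := hmem
    exact ⟨j, (List.eq_of_mem_replicate hj).symm⟩
  · rintro ⟨j, rfl⟩
    have hmem : x j ∈ (List.finRange k).flatMap fun j => List.replicate (m j) (x j) := by
      rw [List.mem_flatMap]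
      exact ⟨j, List.mem_finRange j, List.mem_replicate.2 ⟨by have := hm j; omega, rfl⟩⟩
    obtain ⟨idx, hidx⟩ := List.mem_iff_get.1 hmem
    refine ⟨Fin.cast (blowup_len m h x).symm idx, ?_⟩
    simpa using hidx
lemma blowup_sum' {k n : ℕ} (m : Fin k → ℕ) (h : ∑ j, m j = n) (x : Fin k → ℝ) :
    ∑ i, blowup m h x i = ∑ j, (m j : ℝ) * x j := by
  rw [blowup_eq_get]
  rw [Fintype.sum_equiv (finCongr (blowup_len m h x))
    (fun i => ((List.finRange k).flatMap fun j => List.replicate (m j) (x j)).get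
      (Fin.cast (blowup_len m h x) i))
    (fun i' => ((List.finRange k).flatMap fun j => List.replicate (m j) (x j)).get i')
    (fun i => rfl)]
  have hL : ∀ (l : List ℝ), ∑ i : Fin l.length, l.get i = l.sum := by
    intro l
    rw [Fin.sum_univ_def]
    congr 1
    exact List.ext_get (by simp) (by simp)
  rw [hL]
  rw [List.flatMap, List.sum_flatten, List.map_map, Fin.sum_univ_def]
  congr 1
  ext j
  simp [List.sum_replicate, nsmul_eq_mul]

/-- The arithmetic mean based $n$-distance satisfies the strong $k$-simplex inequality
with constant $1/(k-1)$. -/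
theorem arithMean_strong_simplex {n : ℕ} (hn : 3 ≤ n) (d : (Fin n → ℝ) → ℝ)
    (hdef : d = fun x : Fin n → ℝ => (∑ i, x i) / n - ⨅ i, x i)
    (k : ℕ) (hk2 : 2 ≤ k) (hkn : k ≤ n)
    (m : Fin k → ℕ) (hm : ∀ j, 1 ≤ m j) (hsum : ∑ j, m j = n) :
    ∀ (x : Fin k → ℝ) (z : ℝ),
      d (blowup m hsum x) ≤
        (1 / ((k : ℝ) - 1)) * ∑ i : Fin k, d (blowup m hsum (Function.update x i z)) := by
  intro x z
  have hk0 : 0 < k := by omega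
  have : NeZero k := ⟨by omega⟩
  have hn0 : (0:ℝ) < n := by positivity
  have hk1 : (0:ℝ) < (k:ℝ) - 1 := by
    have : (2:ℝ) ≤ k := by exact_mod_cast hk2
    linarith
  have key : ∀ y : Fin k → ℝ,
      d (blowup m hsum y) = (∑ j, (m j : ℝ) * y j) / n - ⨅ j, y j := by
    intro y
    rw [hdef]
    simp only
    rw [blowup_sum' m hsum y]
    congr 1
    rw [iInf, iInf, blowup_range' m hsum hm y]
  simp only [key]
  -- min facts
  obtain ⟨i₀, hi₀⟩ := Finite.exists_min x
  have hA : ⨅ j, x j = x i₀ :=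
    le_antisymm (ciInf_le (Finite.bddBelow_range x) i₀) (le_ciInf hi₀)
  -- bound on sum of infima
  have hT : ∑ i, (⨅ j, Function.update x i z j) ≤ z + ((k:ℝ) - 1) * x i₀ := by
    have hle : ∀ i : Fin k, (⨅ j, Function.update x i z j) ≤
        Function.update (fun _ : Fin k => x i₀) i₀ z i := by
      intro i
      by_cases hii : i = i₀
      · subst hii
        rw [Function.update_self]
        have h1 := ciInf_le (Finite.bddBelow_range (Function.update x i z)) i
        rwa [Function.update_self] at h1
      · rw [Function.update_of_ne hii]
        have := ciInf_le (Finite.bddBelow_range (Function.update x i z)) i₀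
        rwa [Function.update_of_ne (fun hc => hii hc.symm)] at this
    calc ∑ i, (⨅ j, Function.update x i z j)
        ≤ ∑ i, Function.update (fun _ : Fin k => x i₀) i₀ z i :=
          Finset.sum_le_sum fun i _ => hle i
      _ = z + ((k:ℝ) - 1) * x i₀ := by
          rw [Finset.sum_update_of_mem (Finset.mem_univ i₀)]
          rw [Finset.sum_const]
          have hcard : (Finset.univ \ {i₀}).card = k - 1 := by
            rw [Finset.card_sdiff_of_subset (by simp)]
            simp
          rw [hcard, nsmul_eq_mul]
          have : ((k - 1 : ℕ) : ℝ) = (k:ℝ) - 1 := by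
            have : (1:ℕ) ≤ k := by omega
            push_cast [this]
            ring
          rw [this]
  -- sum of numerators
  have hS : ∑ i, (∑ j, (m j : ℝ) * Function.update x i z j)
      = ((k:ℝ) - 1) * (∑ j, (m j : ℝ) * x j) + n * z := by
    have hterm : ∀ i : Fin k, ∑ j, (m j : ℝ) * Function.update x i z j
        = (∑ j, (m j : ℝ) * x j) - (m i : ℝ) * x i + (m i : ℝ) * z := by
      intro i
      have hfun : (fun j => (m j : ℝ) * Function.update x i z j)
          = Function.update (fun j => (m j : ℝ) * x j) i ((m i : ℝ) * z) := by
        funext j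
        by_cases hji : j = i
        · subst hji; simp
        · simp [Function.update_of_ne hji, hji]
      calc ∑ j, (m j : ℝ) * Function.update x i z j
          = ∑ j, Function.update (fun j => (m j : ℝ) * x j) i ((m i : ℝ) * z) j := by
            rw [hfun]
        _ = (m i : ℝ) * z + ∑ j ∈ Finset.univ \ {i}, (m j : ℝ) * x j :=
            Finset.sum_update_of_mem (Finset.mem_univ i) _ _
        _ = (∑ j, (m j : ℝ) * x j) - (m i : ℝ) * x i + (m i : ℝ) * z := by
            rw [Finset.sum_sdiff_eq_sub (Finset.subset_univ _), Finset.sum_singleton]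
            ring
    rw [Finset.sum_congr rfl fun i _ => hterm i]
    rw [Finset.sum_add_distrib, Finset.sum_sub_distrib]
    rw [Finset.sum_const, ← Finset.sum_mul]
    have hmn : (∑ i, (m i : ℝ)) = (n:ℝ) := by exact_mod_cast congrArg Nat.cast hsum
    rw [hmn]
    simp only [Finset.card_univ, Fintype.card_fin, nsmul_eq_mul]
    ring
  -- finish
  rw [Finset.sum_sub_distrib, ← Finset.sum_div, hS, hA]
  rw [one_div, inv_mul_eq_div, le_div_iff₀ hk1]
  have hdiv : (((k:ℝ) - 1) * (∑ j, (m j : ℝ) * x j) + (n:ℝ) * z) / n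
      = ((k:ℝ) - 1) * ((∑ j, (m j : ℝ) * x j) / n) + z := by
    field_simp
  rw [hdiv]
  nlinarith [hT]
end

section
/- Let |X| ≥ 3, s ∈ [1/(n-1), 1], e ∈ X, and d a standard n-distance on X. Let C = (1/s)·sup{d(x₁,…,xₙ)/∑_{i=1}^n d(x₁,…,xₙ)ᵢᵉ : x₁,…,xₙ ∈ X∖{e}}. Then the map d_s defined by d_s(x₁,…,xₙ) = C·d(x₁,…,xₙ) if e ∈ {x₁,…,xₙ} and d(x₁,…,xₙ) otherwise, is an n-distance on X with best constant exactly s. -/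
open Finset Function

open Classical in
/-- Construction of an $n$-distance with prescribed best constant $s ∈ [1/(n-1),1]$. -/
theorem prescribed_best_constant {X : Type*} {n : ℕ} (hn : 2 ≤ n)
    (hX : ∃ a b c : X, a ≠ b ∧ a ≠ c ∧ b ≠ c)
    (d : (Fin n → X) → ℝ) (hd : IsNDistance d)
    (hstd : ∀ (x : Fin n → X) (z : X),
      d x ≤ (1 / ((n : ℝ) - 1)) * ∑ i, d (Function.update x i z))
    (hbest : ∀ K : ℝ, 0 < K →
      (∀ (x : Fin n → X) (z : X), d x ≤ K * ∑ i, d (Function.update x i z)) →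
      1 / ((n : ℝ) - 1) ≤ K)
    (s : ℝ) (hs1 : 1 / ((n : ℝ) - 1) ≤ s) (hs2 : s ≤ 1) (e : X)
    (C : ℝ)
    (hC : C = (1 / s) * sSup {r : ℝ | ∃ x : Fin n → X, (∀ i, x i ≠ e) ∧
      r = d x / ∑ i, d (Function.update x i e)})
    (ds : (Fin n → X) → ℝ)
    (hds : ds = fun x => if e ∈ Set.range x then C * d x else d x) :
    IsNDistance ds ∧
    (∀ (x : Fin n → X) (z : X), ds x ≤ s * ∑ i, ds (Function.update x i z)) ∧
    (∀ K : ℝ, 0 < K →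
      (∀ (x : Fin n → X) (z : X), ds x ≤ K * ∑ i, ds (Function.update x i z)) → s ≤ K) := by
  classical
  have hn2 : (2:ℝ) ≤ (n:ℝ) := by exact_mod_cast hn
  have hn1 : (0:ℝ) < (n:ℝ) - 1 := by linarith
  have hspos : (0:ℝ) < s := lt_of_lt_of_le (by positivity) hs1
  have hfin : ∀ i : Fin n, ∃ j : Fin n, j ≠ i := by
    intro i
    haveI : Nontrivial (Fin n) :=
      ⟨⟨⟨0, by omega⟩, ⟨1, by omega⟩, by simp [Fin.ext_iff]⟩⟩
    exact exists_ne i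
  -- positivity of denominators
  have hdenom : ∀ x : Fin n → X, (∀ i, x i ≠ e) →
      0 < ∑ i, d (Function.update x i e) := by
    intro x hx
    apply Finset.sum_pos
    · intro i _
      obtain ⟨j, hj⟩ := hfin i
      have hne : ¬ (∀ a b : Fin n, Function.update x i e a = Function.update x i e b) := by
        intro hconst
        have h := hconst j i
        rw [Function.update_apply, Function.update_apply] at h
        simp only [hj, if_neg, if_pos rfl] at h
        exact hx j (by simpa [hj] using h)
      rcases lt_or_eq_of_le (hd.nonneg (Function.update x i e)) with h | h
      · exact h
      · exact absurd ((hd.eq_zero_iff _).mp h.symm) hne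
    · exact ⟨⟨0, by omega⟩, Finset.mem_univ _⟩
  set Sset : Set ℝ := {r : ℝ | ∃ x : Fin n → X, (∀ i, x i ≠ e) ∧
      r = d x / ∑ i, d (Function.update x i e)} with hSset
  set S : ℝ := sSup Sset with hSdef
  have hCS : C = (1 / s) * S := hC
  have hub : ∀ r ∈ Sset, r ≤ 1 / ((n:ℝ) - 1) := by
    rintro r ⟨x, hx, rfl⟩
    rw [div_le_iff₀ (hdenom x hx)]
    exact hstd x e
  have hbdd : BddAbove Sset := ⟨_, fun r hr => hub r hr⟩
  -- two elements distinct from e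
  obtain ⟨a, b, hab, hae, hbe⟩ : ∃ a b : X, a ≠ b ∧ a ≠ e ∧ b ≠ e := by
    obtain ⟨a, b, c, hab, hac, hbc⟩ := hX
    rcases eq_or_ne a e with rfl | ha
    · exact ⟨b, c, hbc, hab.symm, hac.symm⟩
    rcases eq_or_ne b e with rfl | hb
    · exact ⟨a, c, hac, ha, hbc.symm⟩
    exact ⟨a, b, hab, ha, hb⟩
  have i0 : Fin n := ⟨0, by omega⟩
  set x0 : Fin n → X := fun i => if i = (⟨0, by omega⟩ : Fin n) then a else b with hx0def
  have hx0 : ∀ i, x0 i ≠ e := by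
    intro i
    simp only [hx0def]
    split
    · exact hae
    · exact hbe
  have hne : Sset.Nonempty :=
    ⟨d x0 / ∑ i, d (Function.update x0 i e), ⟨x0, hx0, rfl⟩⟩
  have hSle : S ≤ 1 / ((n:ℝ) - 1) := csSup_le hne hub
  have hSpos : 0 < S := by
    have hd0 : 0 < d x0 := by
      have hnc : ¬ (∀ i j : Fin n, x0 i = x0 j) := by
        intro h
        have h01 := h (⟨0, by omega⟩ : Fin n) (⟨1, by omega⟩ : Fin n)
        simp only [hx0def, if_pos rfl] at h01
        rw [if_neg (by simp [Fin.ext_iff])] at h01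
        exact hab h01
      rcases lt_or_eq_of_le (hd.nonneg x0) with h | h
      · exact h
      · exact absurd ((hd.eq_zero_iff _).mp h.symm) hnc
    have hmem : d x0 / (∑ i, d (Function.update x0 i e)) ∈ Sset := ⟨x0, hx0, rfl⟩
    exact lt_of_lt_of_le (div_pos hd0 (hdenom x0 hx0)) (le_csSup hbdd hmem)
  have hsC : s * C = S := by rw [hCS]; field_simp
  have hCpos : 0 < C := by
    rw [hCS]; exact mul_pos (by positivity) hSpos
  have hCle1 : C ≤ 1 := by
    have hSs : S ≤ s := le_trans hSle hs1
    rw [hCS]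
    calc (1/s) * S ≤ (1/s) * s := by
          apply mul_le_mul_of_nonneg_left hSs (by positivity)
      _ = 1 := by field_simp
  -- key inequality A
  have keyA : ∀ x : Fin n → X, (∀ i, x i ≠ e) →
      d x ≤ S * ∑ i, d (Function.update x i e) := by
    intro x hx
    have hmem : d x / (∑ i, d (Function.update x i e)) ∈ Sset := ⟨x, hx, rfl⟩
    have h := le_csSup hbdd hmem
    rw [div_le_iff₀ (hdenom x hx)] at h
    linarith
  subst hds
  simp only []
  -- nonnegativity of ds
  have hfnn : ∀ x : Fin n → X,
      0 ≤ (if e ∈ Set.range x then C * d x else d x) := by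
    intro x
    split
    · exact mul_nonneg hCpos.le (hd.nonneg x)
    · exact hd.nonneg x
  -- the main inequality with constant s
  have main : ∀ (x : Fin n → X) (z : X),
      (if e ∈ Set.range x then C * d x else d x) ≤
      s * ∑ i, (if e ∈ Set.range (Function.update x i z)
          then C * d (Function.update x i z) else d (Function.update x i z)) := by
    intro x z
    by_cases hx : e ∈ Set.range x
    · rw [if_pos hx]
      have h1 : ∀ i : Fin n, C * d (Function.update x i z) ≤
          (if e ∈ Set.range (Function.update x i z)
            then C * d (Function.update x i z) else d (Function.update x i z)) := by
        intro i
        split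
        · exact le_refl _
        · nlinarith [hd.nonneg (Function.update x i z)]
      have hsum : C * ∑ i, d (Function.update x i z) ≤
          ∑ i, (if e ∈ Set.range (Function.update x i z)
            then C * d (Function.update x i z) else d (Function.update x i z)) := by
        rw [Finset.mul_sum]
        exact Finset.sum_le_sum fun i _ => h1 i
      have hT := hstd x z
      have hTnn : 0 ≤ ∑ i, d (Function.update x i z) :=
        Finset.sum_nonneg fun i _ => hd.nonneg _
      have h2 : C * d x ≤ s * (C * ∑ i, d (Function.update x i z)) := by
        nlinarith [mul_le_mul_of_nonneg_left hT hCpos.le,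
          mul_le_mul_of_nonneg_left
            (mul_le_mul_of_nonneg_right hs1 hTnn) hCpos.le]
      calc C * d x ≤ s * (C * ∑ i, d (Function.update x i z)) := h2
        _ ≤ s * ∑ i, (if e ∈ Set.range (Function.update x i z)
            then C * d (Function.update x i z) else d (Function.update x i z)) :=
          mul_le_mul_of_nonneg_left hsum hspos.le
    · rw [if_neg hx]
      have hxe : ∀ i, x i ≠ e := fun i h => hx ⟨i, h⟩
      by_cases hz : z = e
      · rw [hz]
        have hin : ∀ i : Fin n, e ∈ Set.range (Function.update x i e) :=
          fun i => ⟨i, Function.update_self i e x⟩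
        have hsum : ∑ i, (if e ∈ Set.range (Function.update x i e)
            then C * d (Function.update x i e) else d (Function.update x i e)) =
            C * ∑ i, d (Function.update x i e) := by
          rw [Finset.mul_sum]
          exact Finset.sum_congr rfl fun i _ => if_pos (hin i)
        rw [hsum]
        calc d x ≤ S * ∑ i, d (Function.update x i e) := keyA x hxe
          _ = s * (C * ∑ i, d (Function.update x i e)) := by rw [← hsC]; ring
      · have hnin : ∀ i : Fin n, e ∉ Set.range (Function.update x i z) := by
          intro i hmem
          obtain ⟨j, hj⟩ := hmem
          rw [Function.update_apply] at hj
          by_cases hji : j = i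
          · rw [if_pos hji] at hj; exact hz hj
          · rw [if_neg hji] at hj; exact hxe j hj
        have hsum : ∑ i, (if e ∈ Set.range (Function.update x i z)
            then C * d (Function.update x i z) else d (Function.update x i z)) =
            ∑ i, d (Function.update x i z) :=
          Finset.sum_congr rfl fun i _ => if_neg (hnin i)
        rw [hsum]
        have hTnn : 0 ≤ ∑ i, d (Function.update x i z) :=
          Finset.sum_nonneg fun i _ => hd.nonneg _
        calc d x ≤ (1 / ((n:ℝ) - 1)) * ∑ i, d (Function.update x i z) := hstd x z
          _ ≤ s * ∑ i, d (Function.update x i z) :=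
            mul_le_mul_of_nonneg_right hs1 hTnn
  refine ⟨⟨hfnn, ?_, ?_, ?_⟩, main, ?_⟩
  · -- eq_zero_iff
    intro x
    split
    · constructor
      · intro h
        exact (hd.eq_zero_iff x).mp (by
          have : d x = 0 := by
            have := mul_eq_zero.mp h
            rcases this with h' | h'
            · exact absurd h' (ne_of_gt hCpos)
            · exact h'
          exact this)
      · intro h
        rw [(hd.eq_zero_iff x).mpr h, mul_zero]
    · exact hd.eq_zero_iff x
  · -- symmetry
    intro x σ
    have hr : Set.range (x ∘ σ) = Set.range x :=
      σ.surjective.range_comp x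
    simp only [hr, hd.symm x σ]
  · -- simplex inequality
    intro x z
    have hTnn : 0 ≤ ∑ i, (if e ∈ Set.range (Function.update x i z)
        then C * d (Function.update x i z) else d (Function.update x i z)) :=
      Finset.sum_nonneg fun i _ => hfnn _
    calc (if e ∈ Set.range x then C * d x else d x) ≤
        s * ∑ i, (if e ∈ Set.range (Function.update x i z)
          then C * d (Function.update x i z) else d (Function.update x i z)) := main x z
      _ ≤ ∑ i, (if e ∈ Set.range (Function.update x i z)
          then C * d (Function.update x i z) else d (Function.update x i z)) := by
        nlinarith
  · -- best constant
    intro K hK hKle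
    have hSle2 : S ≤ K * C := by
      apply csSup_le hne
      rintro r ⟨x, hx, rfl⟩
      rw [div_le_iff₀ (hdenom x hx)]
      have h := hKle x e
      rw [if_neg (fun hmem => by obtain ⟨i, hi⟩ := hmem; exact hx i hi)] at h
      have hin : ∀ i : Fin n, e ∈ Set.range (Function.update x i e) :=
        fun i => ⟨i, Function.update_self i e x⟩
      have hsum : ∑ i, (if e ∈ Set.range (Function.update x i e)
          then C * d (Function.update x i e) else d (Function.update x i e)) =
          C * ∑ i, d (Function.update x i e) := by
        rw [Finset.mul_sum]
        exact Finset.sum_congr rfl fun i _ => if_pos (hin i)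
      rw [hsum] at h
      calc d x ≤ K * (C * ∑ i, d (Function.update x i e)) := h
        _ = (K * C) * ∑ i, d (Function.update x i e) := by ring
    have h1 : s * S ≤ s * (K * C) := mul_le_mul_of_nonneg_left hSle2 hspos.le
    have h2 : s * (K * C) = K * S := by rw [← hsC]; ring
    nlinarith [hSpos]
end

section
/- Let |X| ≥ 4, n ≥ 3, s ∈ [1/(n-1), 1/(n-2)), C = 2/(1/s − n + 2), a ≠ b in X, and let d be the drastic n-distance on X. Then the map d_s(x₁,…,xₙ) = C·d(x₁,…,xₙ) if both a,b ∈ {x₁,…,xₙ} and d(x₁,…,xₙ) otherwise, is an n-distance on X whose best constant equals s. -/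
open Finset Function

open Classical in
/-- A modification of the drastic $n$-distance with prescribed best constant
$s ∈ [1/(n-1), 1/(n-2))$. -/
theorem drastic_prescribed_best_constant {X : Type*} {n : ℕ} (hn : 3 ≤ n)
    (hX : ∃ a b c e : X, a ≠ b ∧ a ≠ c ∧ a ≠ e ∧ b ≠ c ∧ b ≠ e ∧ c ≠ e)
    (s : ℝ) (hs1 : 1 / ((n : ℝ) - 1) ≤ s) (hs2 : s < 1 / ((n : ℝ) - 2))
    (C : ℝ) (hCdef : C = 2 / (1 / s - n + 2))
    (a b : X) (hab : a ≠ b)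
    (d : (Fin n → X) → ℝ)
    (hdrastic : d = fun x => if ∀ i j : Fin n, x i = x j then 0 else 1)
    (ds : (Fin n → X) → ℝ)
    (hds : ds = fun x => if a ∈ Set.range x ∧ b ∈ Set.range x then C * d x else d x) :
    IsNDistance ds ∧
    (∀ (x : Fin n → X) (z : X), ds x ≤ s * ∑ i, ds (Function.update x i z)) ∧
    (∀ K : ℝ, 0 < K →
      (∀ (x : Fin n → X) (z : X), ds x ≤ K * ∑ i, ds (Function.update x i z)) → s ≤ K) := by
  -- numeric preliminaries
  have hn' : (3 : ℝ) ≤ (n : ℝ) := by exact_mod_cast hn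
  have h1 : (0 : ℝ) < (n : ℝ) - 1 := by linarith
  have h2 : (0 : ℝ) < (n : ℝ) - 2 := by linarith
  have hs0 : 0 < s := lt_of_lt_of_le (by positivity) hs1
  have h1s : 1 / s ≤ (n : ℝ) - 1 := by
    rw [div_le_iff₀ hs0]
    have := (div_le_iff₀ h1).mp hs1
    linarith
  have h2s : (n : ℝ) - 2 < 1 / s := by
    rw [lt_div_iff₀ hs0]
    rw [lt_div_iff₀ h2] at hs2
    linarith
  have hden : 0 < 1 / s - (n : ℝ) + 2 := by linarith
  have hden1 : 1 / s - (n : ℝ) + 2 ≤ 1 := by linarith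
  have hC0 : 0 < C := by rw [hCdef]; positivity
  have hC2 : 2 ≤ C := by
    rw [hCdef, le_div_iff₀ hden]; linarith
  have hCs : C = s * (((n : ℝ) - 2) * C + 2) := by
    have hkey : C * (1 / s - (n : ℝ) + 2) = 2 := by
      rw [hCdef]; exact div_mul_cancel₀ 2 (ne_of_gt hden)
    have hinv : s * (1 / s) = 1 := by field_simp
    nlinarith [hkey, hinv]
  have hsn1 : 1 ≤ s * ((n : ℝ) - 1) := by
    rw [div_le_iff₀ hs0] at h1s; linarith
  -- value lemmas for ds
  have hds0 : ∀ x : Fin n → X, (∀ i j, x i = x j) → ds x = 0 := by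
    intro x h
    have hd0 : d x = 0 := by rw [hdrastic]; exact if_pos h
    simp only [hds]
    by_cases hq : a ∈ Set.range x ∧ b ∈ Set.range x
    · rw [if_pos hq, hd0, mul_zero]
    · rw [if_neg hq, hd0]
  have hdsC : ∀ x : Fin n → X, a ∈ Set.range x → b ∈ Set.range x → ds x = C := by
    intro x ha hb
    have hne : ¬ ∀ i j, x i = x j := by
      obtain ⟨i, hi⟩ := ha
      obtain ⟨j, hj⟩ := hb
      intro h
      exact hab (by rw [← hi, ← hj]; exact h i j)
    have hd1 : d x = 1 := by rw [hdrastic]; exact if_neg hne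
    simp only [hds]
    rw [if_pos ⟨ha, hb⟩, hd1, mul_one]
  have hds1 : ∀ x : Fin n → X, ¬(∀ i j, x i = x j) →
      ¬(a ∈ Set.range x ∧ b ∈ Set.range x) → ds x = 1 := by
    intro x h hq
    have hd1 : d x = 1 := by rw [hdrastic]; exact if_neg h
    simp only [hds]
    rw [if_neg hq, hd1]
  have hge1 : ∀ x : Fin n → X, ¬(∀ i j, x i = x j) → 1 ≤ ds x := by
    intro x h
    by_cases hq : a ∈ Set.range x ∧ b ∈ Set.range x
    · rw [hdsC x hq.1 hq.2]; linarith
    · rw [hds1 x h hq]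
  have hnn : ∀ x : Fin n → X, 0 ≤ ds x := by
    intro x
    by_cases h : ∀ i j, x i = x j
    · rw [hds0 x h]
    · linarith [hge1 x h]
  -- sum decomposition lemma
  have sumdec : ∀ (f : Fin n → ℝ) (i0 i1 : Fin n), i0 ≠ i1 →
      (∀ i, i ≠ i0 → i ≠ i1 → f i = C) →
      ∑ i, f i = ((n : ℝ) - 2) * C + f i0 + f i1 := by
    intro f i0 i1 h h'
    have hm : i1 ∈ Finset.univ.erase i0 :=
      Finset.mem_erase.mpr ⟨Ne.symm h, Finset.mem_univ i1⟩
    rw [← Finset.sum_erase_add _ _ (Finset.mem_univ i0), ← Finset.sum_erase_add _ _ hm]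
    have hcongr : ∑ i ∈ (Finset.univ.erase i0).erase i1, f i =
        ∑ i ∈ (Finset.univ.erase i0).erase i1, C := by
      apply Finset.sum_congr rfl
      intro i hi
      rw [Finset.mem_erase, Finset.mem_erase] at hi
      exact h' i hi.2.1 hi.1
    rw [hcongr, Finset.sum_const, Finset.card_erase_of_mem hm,
      Finset.card_erase_of_mem (Finset.mem_univ i0), Finset.card_univ, Fintype.card_fin,
      show n - 1 - 1 = n - 2 from by omega, nsmul_eq_mul, Nat.cast_sub (by omega)]
    push_cast
    ring
  -- the key inequality
  have key : ∀ (x : Fin n → X) (z : X), ds x ≤ s * ∑ i, ds (Function.update x i z) := by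
    intro x z
    by_cases hc : ∀ i j, x i = x j
    · rw [hds0 x hc]
      exact mul_nonneg hs0.le (Finset.sum_nonneg fun i _ => hnn _)
    by_cases hq : a ∈ Set.range x ∧ b ∈ Set.range x
    · obtain ⟨⟨i0, hi0⟩, ⟨i1, hi1⟩⟩ := hq
      have hi01 : i0 ≠ i1 := by
        intro h
        exact hab (by rw [← hi0, ← hi1, h])
      set f := fun i => ds (Function.update x i z) with hf
      have hfC : ∀ i, i ≠ i0 → i ≠ i1 → f i = C := by
        intro i hI0 hI1
        apply hdsC
        · exact ⟨i0, by rw [Function.update_of_ne (Ne.symm hI0)]; exact hi0⟩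
        · exact ⟨i1, by rw [Function.update_of_ne (Ne.symm hI1)]; exact hi1⟩
      have hpair : 2 ≤ f i0 + f i1 := by
        by_cases h0 : ∀ j k, (Function.update x i0 z) j = (Function.update x i0 z) k
        · have hz : z = b := by
            have h := h0 i0 i1
            rwa [Function.update_self, Function.update_of_ne (Ne.symm hi01), hi1] at h
          have hupd : Function.update x i1 z = x := by
            rw [hz, ← hi1]; exact Function.update_eq_self i1 x
          have hf1 : f i1 = C := by
            show ds (Function.update x i1 z) = C
            rw [hupd]; exact hdsC x ⟨i0, hi0⟩ ⟨i1, hi1⟩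
          have := hnn (Function.update x i0 z)
          rw [hf1]
          show (2 : ℝ) ≤ ds (Function.update x i0 z) + C
          linarith
        by_cases h1 : ∀ j k, (Function.update x i1 z) j = (Function.update x i1 z) k
        · have hz : z = a := by
            have h := h1 i1 i0
            rwa [Function.update_self, Function.update_of_ne hi01, hi0] at h
          have hupd : Function.update x i0 z = x := by
            rw [hz, ← hi0]; exact Function.update_eq_self i0 x
          have hf0 : f i0 = C := by
            show ds (Function.update x i0 z) = C
            rw [hupd]; exact hdsC x ⟨i0, hi0⟩ ⟨i1, hi1⟩
          have := hnn (Function.update x i1 z)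
          rw [hf0]
          show (2 : ℝ) ≤ C + ds (Function.update x i1 z)
          linarith
        · have g0 := hge1 _ h0
          have g1 := hge1 _ h1
          show (2 : ℝ) ≤ ds (Function.update x i0 z) + ds (Function.update x i1 z)
          linarith
      have hsum := sumdec f i0 i1 hi01 hfC
      have hbound : ((n : ℝ) - 2) * C + 2 ≤ ∑ i, f i := by
        rw [hsum]; linarith
      rw [hdsC x ⟨i0, hi0⟩ ⟨i1, hi1⟩]
      calc C = s * (((n : ℝ) - 2) * C + 2) := hCs
        _ ≤ s * ∑ i, f i := by
            apply mul_le_mul_of_nonneg_left hbound hs0.le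
    · -- ds x = 1
      rw [hds1 x hc hq]
      -- at most one i gives a constant update
      set S := Finset.univ.filter
        (fun i => ∀ j k, (Function.update x i z) j = (Function.update x i z) k) with hS
      have hS1 : S.card ≤ 1 := by
        apply Finset.card_le_one.mpr
        intro i hi j hj
        by_contra hij
        apply hc
        intro k l
        rw [hS, Finset.mem_filter] at hi hj
        have hxz : ∀ m, x m = z := by
          intro m
          by_cases hm : m = i
          · have h := hj.2 m j
            rwa [Function.update_of_ne (by rw [hm]; exact hij), Function.update_self] at h
          · have h := hi.2 m i
            rwa [Function.update_of_ne hm, Function.update_self] at h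
        rw [hxz k, hxz l]
      have hsub : ∀ i ∈ Finset.univ \ S, 1 ≤ ds (Function.update x i z) := by
        intro i hi
        apply hge1
        rw [Finset.mem_sdiff, hS, Finset.mem_filter] at hi
        intro h
        exact hi.2 ⟨Finset.mem_univ i, h⟩
      have hcard : (n : ℝ) - 1 ≤ ((Finset.univ \ S).card : ℝ) := by
        have : n - 1 ≤ (Finset.univ \ S).card := by
          rw [Finset.card_sdiff_of_subset (Finset.subset_univ S), Finset.card_univ, Fintype.card_fin]
          omega
        calc (n : ℝ) - 1 ≤ ((n - 1 : ℕ) : ℝ) := by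
              rw [Nat.cast_sub (by omega)]; push_cast; linarith
          _ ≤ _ := by exact_mod_cast this
      have hsum2 : (n : ℝ) - 1 ≤ ∑ i, ds (Function.update x i z) := by
        calc (n : ℝ) - 1 ≤ ((Finset.univ \ S).card : ℝ) := hcard
          _ = ∑ _i ∈ Finset.univ \ S, (1 : ℝ) := by rw [Finset.sum_const, nsmul_eq_mul, mul_one]
          _ ≤ ∑ i ∈ Finset.univ \ S, ds (Function.update x i z) := Finset.sum_le_sum hsub
          _ ≤ ∑ i, ds (Function.update x i z) := by
              apply Finset.sum_le_sum_of_subset_of_nonneg (Finset.sdiff_subset)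
              intro i _ _
              exact hnn _
      calc (1 : ℝ) ≤ s * ((n : ℝ) - 1) := hsn1
        _ ≤ s * ∑ i, ds (Function.update x i z) :=
            mul_le_mul_of_nonneg_left hsum2 hs0.le
  have hsle1 : s ≤ 1 := by
    refine le_of_lt (lt_of_lt_of_le hs2 ?_)
    rw [div_le_one h2]; linarith
  refine ⟨⟨hnn, ?_, ?_, ?_⟩, key, ?_⟩
  · -- eq_zero_iff
    intro x
    constructor
    · intro h
      by_contra hcon
      have := hge1 x hcon
      linarith
    · exact hds0 x
  · -- symm
    intro x σ
    have hrange : Set.range (x ∘ ⇑σ) = Set.range x := σ.surjective.range_comp x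
    have hconst_iff : (∀ i j, (x ∘ ⇑σ) i = (x ∘ ⇑σ) j) ↔ ∀ i j, x i = x j := by
      constructor
      · intro h i j
        have := h (σ.symm i) (σ.symm j)
        simpa using this
      · intro h i j
        exact h _ _
    simp only [hds, hdrastic, hrange, hconst_iff]
  · -- simplex
    intro x z
    calc ds x ≤ s * ∑ i, ds (Function.update x i z) := key x z
      _ ≤ 1 * ∑ i, ds (Function.update x i z) := by
          apply mul_le_mul_of_nonneg_right hsle1
          exact Finset.sum_nonneg fun i _ => hnn _
      _ = ∑ i, ds (Function.update x i z) := one_mul _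
  · -- best constant lower bound
    intro K hK hK2
    obtain ⟨p, q, r, t, hpq, hpr, hpt, hqr, hqt, hrt⟩ := hX
    obtain ⟨c, hca, hcb⟩ : ∃ c : X, c ≠ a ∧ c ≠ b := by
      by_cases hp : p ≠ a ∧ p ≠ b
      · exact ⟨p, hp⟩
      by_cases hq : q ≠ a ∧ q ≠ b
      · exact ⟨q, hq⟩
      push_neg at hp hq
      by_cases hpa : p = a
      · refine ⟨r, ?_, ?_⟩
        · rw [← hpa]; exact Ne.symm hpr
        · by_cases hqa : q = a
          · exact absurd (hpa.trans hqa.symm) hpq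
          · rw [← hq hqa]; exact Ne.symm hqr
      · have hpb : p = b := hp hpa
        refine ⟨r, ?_, ?_⟩
        · by_cases hqa : q = a
          · rw [← hqa]; exact Ne.symm hqr
          · exact absurd (hpb.trans (hq hqa).symm) hpq
        · rw [← hpb]; exact Ne.symm hpr
    have h0n : 0 < n := by omega
    have h1n : 1 < n := by omega
    have h2n : 2 < n := by omega
    set i0 : Fin n := ⟨0, h0n⟩ with hi0def
    set i1 : Fin n := ⟨1, h1n⟩ with hi1def
    set i2 : Fin n := ⟨2, h2n⟩ with hi2def
    have h01 : i0 ≠ i1 := by simp [hi0def, hi1def, Fin.ext_iff]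
    have h02 : i0 ≠ i2 := by simp [hi0def, hi2def, Fin.ext_iff]
    have h12 : i1 ≠ i2 := by simp [hi1def, hi2def, Fin.ext_iff]
    set x : Fin n → X := fun i => if i = i0 then a else if i = i1 then b else c with hx
    have hx0 : x i0 = a := by simp [hx]
    have hx1 : x i1 = b := by simp [hx, Ne.symm h01]
    have hxo : ∀ i, i ≠ i0 → i ≠ i1 → x i = c := by
      intro i h h'
      simp [hx, h, h']
    set f := fun i => ds (Function.update x i c) with hf
    have hfo : ∀ i, i ≠ i0 → i ≠ i1 → f i = C := by
      intro i h h'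
      have hupd : Function.update x i c = x := by
        rw [← hxo i h h']; exact Function.update_eq_self i x
      show ds (Function.update x i c) = C
      rw [hupd]
      exact hdsC x ⟨i0, hx0⟩ ⟨i1, hx1⟩
    have hval : ∀ (i j : Fin n), j ≠ i → (Function.update x i c j = b ∧ j = i1) ∨
        Function.update x i c j = c ∨ Function.update x i c j = a := by
      intro i j hji
      rw [Function.update_of_ne hji]
      by_cases hj0 : j = i0
      · right; right; rw [hj0, hx0]
      by_cases hj1 : j = i1
      · left; exact ⟨by rw [hj1, hx1], hj1⟩
      · right; left; exact hxo j hj0 hj1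
    have hf0 : f i0 = 1 := by
      apply hds1
      · intro h
        have h' := h i1 i2
        rw [Function.update_of_ne (Ne.symm h01), Function.update_of_ne (Ne.symm h02),
          hx1, hxo i2 (Ne.symm h02) (Ne.symm h12)] at h'
        exact hcb h'.symm
      · rintro ⟨⟨j, hj⟩, -⟩
        by_cases hji : j = i0
        · rw [hji, Function.update_self] at hj
          exact hca hj
        · rw [Function.update_of_ne hji] at hj
          by_cases hj1 : j = i1
          · rw [hj1, hx1] at hj
            exact hab hj.symm
          · rw [hxo j hji hj1] at hj
            exact hca hj
    have hf1 : f i1 = 1 := by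
      apply hds1
      · intro h
        have h' := h i0 i2
        rw [Function.update_of_ne h01, Function.update_of_ne (Ne.symm h12),
          hx0, hxo i2 (Ne.symm h02) (Ne.symm h12)] at h'
        exact hca h'.symm
      · rintro ⟨-, ⟨j, hj⟩⟩
        by_cases hji : j = i1
        · rw [hji, Function.update_self] at hj
          exact hcb hj
        · rw [Function.update_of_ne hji] at hj
          by_cases hj0 : j = i0
          · rw [hj0, hx0] at hj
            exact hab hj
          · rw [hxo j hj0 hji] at hj
            exact hcb hj
    have hsum : ∑ i, f i = ((n : ℝ) - 2) * C + 2 := by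
      rw [sumdec f i0 i1 h01 hfo, hf0, hf1]; ring
    have hKx := hK2 x c
    rw [hdsC x ⟨i0, hx0⟩ ⟨i1, hx1⟩] at hKx
    have hKx' : C ≤ K * (((n : ℝ) - 2) * C + 2) := by
      rwa [show (∑ i, ds (Function.update x i c)) = ((n : ℝ) - 2) * C + 2 from hsum] at hKx
    have hpos : 0 < ((n : ℝ) - 2) * C + 2 := by positivity
    have : s * (((n : ℝ) - 2) * C + 2) ≤ K * (((n : ℝ) - 2) * C + 2) := by
      rw [← hCs]; exact hKx'
    exact le_of_mul_le_mul_right this hpos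
end

section
/- Let (dₙ)_{n≥2} be a sequence where each dₙ is a standard n-distance on X and dₙ(x,z,…,z) ≤ d₂(x,z) for all n ≥ 2 and x,z ∈ X. Then the map d on ⋃_{n≥2} Xⁿ with d|_{Xⁿ} = dₙ is a multidistance on X: for each n, dₙ(x₁,…,xₙ) ≤ ∑_{i=1}^n d₂(xᵢ,z) for all x₁,…,xₙ,z ∈ X. -/
open Finset Function

/-- A sequence of standard $n$-distances dominated on two-point tuples by the binary one
defines a multidistance. -/
theorem multidistance_of_standard_sequence {X : Type*}
    (D : ∀ n : ℕ, (Fin n → X) → ℝ)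
    (hd : ∀ n, 2 ≤ n → IsNDistance (D n))
    (hstd : ∀ n, 2 ≤ n → ∀ (x : Fin n → X) (z : X),
      D n x ≤ (1 / ((n : ℝ) - 1)) * ∑ i, D n (Function.update x i z))
    (hbin : ∀ n, 2 ≤ n → ∀ x z : X,
      D n (fun i : Fin n => if (i : ℕ) = 0 then x else z) ≤ D 2 ![x, z]) :
    ∀ n, 2 ≤ n → ∀ (x : Fin n → X) (z : X), D n x ≤ ∑ i, D 2 ![x i, z] := by
  intro n hn x z
  have key : ∀ m : ℕ, 1 ≤ m → ∀ S : Finset (Fin n), Sᶜ.card = m →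
      D n (fun j => if j ∈ S then z else x j) ≤ ∑ i ∈ Sᶜ, D 2 ![x i, z] := by
    intro m
    induction m with
    | zero => omega
    | succ m ih =>
      intro _ S hcard
      rcases Nat.eq_zero_or_pos m with hm | hm
      · -- base case: exactly one coordinate not replaced by z
        subst hm
        obtain ⟨i₀, hi₀⟩ := Finset.card_eq_one.mp hcard
        have hmem : ∀ j : Fin n, j ∈ S ↔ j ≠ i₀ := by
          intro j
          constructor
          · intro hj hji
            have : j ∈ Sᶜ := by rw [hi₀]; simp [hji]
            simp at this; exact this hj
          · intro hj
            by_contra hjS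
            have : j ∈ Sᶜ := Finset.mem_compl.mpr hjS
            rw [hi₀] at this; simp at this; exact hj this
        have hfun : (fun j => if j ∈ S then z else x j)
            = (fun j : Fin n => if (j : ℕ) = 0 then x i₀ else z) ∘
              (Equiv.swap (⟨0, by omega⟩ : Fin n) i₀) := by
          funext j
          simp only [Function.comp_apply]
          by_cases hji : j = i₀
          · have hnS : j ∉ S := by rw [hmem]; simpa using hji
            subst hji
            rw [Equiv.swap_apply_right]
            simp [hnS]
          · have hjS : j ∈ S := (hmem j).mpr hji
            simp only [hjS, if_true]
            by_cases hj0 : j = (⟨0, by omega⟩ : Fin n)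
            · subst hj0
              rw [Equiv.swap_apply_left]
              have : (i₀ : ℕ) ≠ 0 := by
                intro h
                apply hji
                exact (Fin.ext h.symm)
              simp [this]
            · rw [Equiv.swap_apply_of_ne_of_ne hj0 hji]
              have : (j : ℕ) ≠ 0 := fun h => hj0 (Fin.ext h)
              simp [this]
        rw [hi₀, Finset.sum_singleton, hfun, (hd n hn).symm]
        exact hbin n hn (x i₀) z
      · -- inductive step
        have hScard : S.card + Sᶜ.card = n := by
          simpa using Finset.card_add_card_compl S
        have hkn : S.card = n - (m + 1) := by omega
        set t : Finset (Fin n) → (Fin n → X) :=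
          fun T => (fun j => if j ∈ T then z else x j) with ht
        have hupd : ∀ i : Fin n, Function.update (t S) i z = t (insert i S) := by
          intro i
          funext j
          by_cases hji : j = i
          · subst hji; simp [ht, Function.update_self]
          · simp [ht, Function.update_of_ne hji, hji]
        have hsimp := hstd n hn (t S) z
        have hsplit : ∑ i, D n (Function.update (t S) i z)
            = S.card * D n (t S) + ∑ i ∈ Sᶜ, D n (t (insert i S)) := by
          rw [← Finset.sum_add_sum_compl S]
          congr 1
          · rw [Finset.sum_congr rfl (fun i hi => by
              rw [hupd i, Finset.insert_eq_self.mpr hi])]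
            rw [Finset.sum_const, nsmul_eq_mul]
          · exact Finset.sum_congr rfl (fun i _ => by rw [hupd i])
        set Sig0 : ℝ := ∑ i ∈ Sᶜ, D 2 ![x i, z] with hSig0
        have hIH : ∀ i ∈ Sᶜ, D n (t (insert i S)) ≤ Sig0 - D 2 ![x i, z] := by
          intro i hi
          have hcompl : (insert i S)ᶜ = Sᶜ.erase i := by
            ext j; simp [Finset.mem_compl, Finset.mem_erase, and_comm, not_or]
          have hcard' : (insert i S)ᶜ.card = m := by
            rw [hcompl, Finset.card_erase_of_mem hi, hcard]; omega
          have := ih hm (insert i S) hcard'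
          rw [hcompl, Finset.sum_erase_eq_sub hi] at this
          exact this
        have hRbound : ∑ i ∈ Sᶜ, D n (t (insert i S)) ≤ m * Sig0 := by
          calc ∑ i ∈ Sᶜ, D n (t (insert i S))
              ≤ ∑ i ∈ Sᶜ, (Sig0 - D 2 ![x i, z]) := Finset.sum_le_sum hIH
            _ = Sᶜ.card * Sig0 - Sig0 := by
                rw [Finset.sum_sub_distrib, Finset.sum_const, nsmul_eq_mul, hSig0]
            _ = m * Sig0 := by rw [hcard]; push_cast; ring
        -- combine
        have hn1 : (1 : ℝ) < (n : ℝ) := by exact_mod_cast by omega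
        have hkreal : (S.card : ℝ) = (n : ℝ) - (m + 1) := by
          have h : S.card + (m + 1) = n := by omega
          have h2 : ((S.card + (m + 1) : ℕ) : ℝ) = (n : ℝ) := by rw [h]
          push_cast at h2
          linarith
        have hm1 : (1 : ℝ) ≤ (m : ℝ) := by exact_mod_cast hm
        rw [hsplit] at hsimp
        have hpos : (0 : ℝ) < (n : ℝ) - 1 := by linarith
        rw [div_mul_eq_mul_div, one_mul, le_div_iff₀ hpos] at hsimp
        -- hsimp : D n (t S) * ((n:ℝ) - 1) ≤ S.card * D n (t S) + ∑ ...
        have : D n (t S) * ((n : ℝ) - 1) ≤ (S.card : ℝ) * D n (t S) + m * Sig0 := by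
          linarith
        rw [hkreal] at this
        have hfinal : (m : ℝ) * D n (t S) ≤ (m : ℝ) * Sig0 := by nlinarith
        have := le_of_mul_le_mul_left (by linarith : (m:ℝ) * D n (t S) ≤ (m:ℝ) * Sig0)
          (by linarith : (0:ℝ) < (m:ℝ))
        exact this
  have h0 := key n (by omega) ∅ (by simp)
  simpa using h0
end
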